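/- arXiv:1401.5408 — 8 statements merged into one kernel-verified Lean document; each statement's English description precedes it below -/
import Mathlib

section
/- Let m = (m_1,…,m_N) ∈ R^N and y = (y_1,…,y_N) ∈ R^N, and let λ > 0. Then m minimizes f(m) = (1/2)∑_{t=1}^N (y_t − m_t)^2 + λ ∑_{t=2}^N |m_t − m_{t−1}| if and only if: (i) |∑_{t=1}^k (m_t − y_t)| ≤ λ for all 1 ≤ k ≤ N−1; (ii) ∑_{t=1}^N m_t = ∑_{t=1}^N y_t; and (iii) for every index t with m_t ≠ m_{t−1}, ∑_{j=1}^{t−1}(m_j − y_j) = λ·sgn(m_t − m_{t−1}). -/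
/-!
Write `z k = ∑_{j ≤ k} (m j - y j)` and `Δm t = m t - m (t - 1)`.

If the three conditions hold, summation by parts with `z N = 0` turns the first-order term
`∑ (m t - y t) (g t - m t)` of the fit into `∑ z (t - 1) (Δm t - Δg t)`; by (i) each
`z (t - 1) Δg t ≤ λ |Δg t|` and by (iii) `z (t - 1) Δm t = λ |Δm t|`, so the increase of the
penalty pays for it, and the rest of the fit difference is the square `(g t - m t)² / 2 ≥ 0`.

Conversely, shifting `m 1, …, m k` by `ε` changes the objective by
`ε z k + (k / 2) ε² + λ (|Δm (k + 1) - ε| - |Δm (k + 1)|)`, the jump term being absent for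
`k = N`. A minimizer makes this nonnegative for every `ε`, so both one-sided slopes at `ε = 0`
are nonnegative, which is exactly (ii) for `k = N`, (i) for `k < N`, and (iii) where
`Δm (k + 1) ≠ 0`.
-/

open Finset Filter Topology

theorem Real.sign_mul_self (a : ℝ) : Real.sign a * a = |a| := by
  rcases lt_trichotomy a 0 with ha | rfl | ha
  · rw [Real.sign_of_neg ha, abs_of_neg ha, neg_one_mul]
  · simp
  · rw [Real.sign_of_pos ha, abs_of_pos ha, one_mul]

section Scalar

variable {z c lam a : ℝ}

theorem nonneg_of_eventually_nonneg_mul_add_sq {b : ℝ}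
    (h : ∀ᶠ ε in 𝓝[>] (0 : ℝ), 0 ≤ ε * b + c * ε ^ 2) : 0 ≤ b := by
  have hcont : Continuous fun ε : ℝ => b + c * ε := by fun_prop
  have hlim : Tendsto (fun ε : ℝ => b + c * ε) (𝓝[>] 0) (𝓝 b) :=
    tendsto_nhdsWithin_of_tendsto_nhds (hcont.tendsto' 0 b (by simp))
  refine ge_of_tendsto hlim ?_
  filter_upwards [h, self_mem_nhdsWithin] with ε hε (hpos : 0 < ε)
  exact nonneg_of_mul_nonneg_right (by linarith [hε]) hpos

theorem eq_zero_of_forall_nonneg_mul_add_sq (h : ∀ ε, 0 ≤ ε * z + c * ε ^ 2) : z = 0 := by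
  have hpos := nonneg_of_eventually_nonneg_mul_add_sq (Eventually.of_forall h)
  have hneg := nonneg_of_eventually_nonneg_mul_add_sq (b := -z) (c := c)
    (Eventually.of_forall fun ε => by simpa using h (-ε))
  linarith

theorem abs_le_of_forall_nonneg_mul_add_sq_add_abs (hlam : 0 ≤ lam)
    (h : ∀ ε, 0 ≤ ε * z + c * ε ^ 2 + lam * (|a - ε| - |a|)) : |z| ≤ lam := by
  have hkink : ∀ ε, lam * (|a - ε| - |a|) ≤ lam * |ε| := fun ε =>
    mul_le_mul_of_nonneg_left (by simpa using abs_sub_abs_le_abs_sub (a - ε) a) hlam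
  have hlow := nonneg_of_eventually_nonneg_mul_add_sq (b := z + lam) (c := c) <| by
    filter_upwards [self_mem_nhdsWithin] with ε (hε : 0 < ε)
    have := hkink ε
    rw [abs_of_pos hε] at this
    linear_combination h ε + this
  have hupp := nonneg_of_eventually_nonneg_mul_add_sq (b := lam - z) (c := c) <| by
    filter_upwards [self_mem_nhdsWithin] with ε (hε : 0 < ε)
    have := hkink (-ε)
    rw [abs_neg, abs_of_pos hε] at this
    linear_combination h (-ε) + this
  exact abs_le.2 ⟨by linarith, by linarith⟩

theorem le_of_forall_nonneg_mul_add_sq_add_abs (ha : 0 < a)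
    (h : ∀ ε, 0 ≤ ε * z + c * ε ^ 2 + lam * (|a - ε| - |a|)) : lam ≤ z := by
  have := nonneg_of_eventually_nonneg_mul_add_sq (b := z - lam) (c := c) <| by
    filter_upwards [Ioo_mem_nhdsGT ha] with ε ⟨hε, hεa⟩
    have hε' := h ε
    rw [abs_of_pos (sub_pos.2 hεa), abs_of_pos ha] at hε'
    linear_combination hε'
  linarith

theorem eq_mul_sign_of_forall_nonneg_mul_add_sq_add_abs (hlam : 0 ≤ lam) (ha : a ≠ 0)
    (h : ∀ ε, 0 ≤ ε * z + c * ε ^ 2 + lam * (|a - ε| - |a|)) : z = lam * Real.sign a := by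
  have hz := abs_le.1 (abs_le_of_forall_nonneg_mul_add_sq_add_abs hlam h)
  rcases ha.lt_or_gt with ha | ha
  · have := le_of_forall_nonneg_mul_add_sq_add_abs (z := -z) (c := c) (lam := lam)
      (neg_pos.2 ha) fun ε => by
        rw [show -a - ε = -(a - -ε) by ring, abs_neg, abs_neg]
        linear_combination h (-ε)
    rw [Real.sign_of_neg ha]
    linarith
  · have := le_of_forall_nonneg_mul_add_sq_add_abs ha h
    rw [Real.sign_of_pos ha]
    linarith

end Scalar

theorem Finset.sum_abs_sub_ite_sub_abs {ι : Type*} [DecidableEq ι] (s : Finset ι) (d : ι → ℝ)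
    (i : ι) (ε : ℝ) :
    ∑ t ∈ s, (|d t - if t = i then ε else 0| - |d t|)
      = if i ∈ s then |d i - ε| - |d i| else 0 := by
  rw [← sum_ite_eq' s i fun t => |d t - ε| - |d t|]
  refine sum_congr rfl fun t _ => ?_
  split_ifs <;> simp

theorem sum_Icc_mul_by_parts (r d : ℕ → ℝ) (n : ℕ) :
    ∑ t ∈ Icc 1 n, r t * d t = (∑ j ∈ Icc 1 n, r j) * d n
      - ∑ t ∈ Icc 2 n, (∑ j ∈ Icc 1 (t - 1), r j) * (d t - d (t - 1)) := by
  induction n with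
  | zero => simp
  | succ n ih =>
    rcases Nat.eq_zero_or_pos n with rfl | hn
    · simp
    rw [sum_Icc_succ_top (by omega), sum_Icc_succ_top (by omega), sum_Icc_succ_top (by omega), ih,
      Nat.add_sub_cancel]
    ring

noncomputable def flsaObjective (N : ℕ) (lam : ℝ) (y g : ℕ → ℝ) : ℝ :=
  (1 / 2) * ∑ t ∈ Icc 1 N, (y t - g t) ^ 2 + lam * ∑ t ∈ Icc 2 N, |g t - g (t - 1)|

section Objective

variable {N : ℕ} {lam : ℝ} {y m : ℕ → ℝ}

theorem flsaObjective_le_of_kkt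
    (hbound : ∀ k, 1 ≤ k → k ≤ N - 1 → |∑ t ∈ Icc 1 k, (m t - y t)| ≤ lam)
    (hsum : ∑ t ∈ Icc 1 N, m t = ∑ t ∈ Icc 1 N, y t)
    (hsign : ∀ t, 2 ≤ t → t ≤ N → m t ≠ m (t - 1) →
      ∑ j ∈ Icc 1 (t - 1), (m j - y j) = lam * Real.sign (m t - m (t - 1)))
    (g : ℕ → ℝ) : flsaObjective N lam y m ≤ flsaObjective N lam y g := by
  have hparts := sum_Icc_mul_by_parts (fun t => m t - y t) (fun t => g t - m t) N
  rw [sum_sub_distrib, hsum, sub_self, zero_mul, zero_sub] at hparts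
  have hsq : ∑ t ∈ Icc 1 N, (m t - y t) * (g t - m t)
      ≤ (1 / 2) * ∑ t ∈ Icc 1 N, (y t - g t) ^ 2 - (1 / 2) * ∑ t ∈ Icc 1 N, (y t - m t) ^ 2 := by
    rw [mul_sum, mul_sum, ← sum_sub_distrib]
    exact sum_le_sum fun t _ => by nlinarith [sq_nonneg (g t - m t)]
  have htv : ∑ t ∈ Icc 2 N, (∑ j ∈ Icc 1 (t - 1), (m j - y j))
        * (g t - m t - (g (t - 1) - m (t - 1)))
      ≤ lam * ∑ t ∈ Icc 2 N, |g t - g (t - 1)| - lam * ∑ t ∈ Icc 2 N, |m t - m (t - 1)| := by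
    rw [mul_sum, mul_sum, ← sum_sub_distrib]
    refine sum_le_sum fun t ht => ?_
    obtain ⟨ht2, htN⟩ := mem_Icc.1 ht
    set z := ∑ j ∈ Icc 1 (t - 1), (m j - y j)
    have hg : z * (g t - g (t - 1)) ≤ lam * |g t - g (t - 1)| := by
      refine (le_abs_self _).trans ?_
      rw [abs_mul]
      exact mul_le_mul_of_nonneg_right (hbound (t - 1) (by omega) (by omega)) (abs_nonneg _)
    have hm : z * (m t - m (t - 1)) = lam * |m t - m (t - 1)| := by
      by_cases hne : m t = m (t - 1)
      · simp [hne]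
      · rw [show z = _ from hsign t ht2 htN hne, mul_assoc, Real.sign_mul_self]
    linarith
  unfold flsaObjective
  linarith

theorem flsaObjective_add_prefix {k : ℕ} (hk : k ≤ N) (ε : ℝ) :
    flsaObjective N lam y (fun j => m j + if j ≤ k then ε else 0) = flsaObjective N lam y m
      + (ε * ∑ j ∈ Icc 1 k, (m j - y j) + k / 2 * ε ^ 2)
      + lam * ∑ t ∈ Icc 2 N,
          (|m t - m (t - 1) - if t = k + 1 then ε else 0| - |m t - m (t - 1)|) := by
  have hsq : ∑ t ∈ Icc 1 N, (y t - (m t + if t ≤ k then ε else 0)) ^ 2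
      = ∑ t ∈ Icc 1 N, (y t - m t) ^ 2 + (2 * ε * ∑ j ∈ Icc 1 k, (m j - y j) + k * ε ^ 2) := by
    have hprefix : (Icc 1 N).filter (· ≤ k) = Icc 1 k := by
      ext t; simp only [mem_filter, mem_Icc]; omega
    have hterm : ∀ t, (y t - (m t + if t ≤ k then ε else 0)) ^ 2
        = (y t - m t) ^ 2 + if t ≤ k then 2 * ε * (m t - y t) + ε ^ 2 else 0 := fun t => by
      split_ifs <;> ring
    rw [sum_congr rfl fun t _ => hterm t, sum_add_distrib, ← sum_filter, hprefix,
      sum_add_distrib, sum_const, Nat.card_Icc, nsmul_eq_mul, ← mul_sum, Nat.add_sub_cancel]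
  have htv : ∑ t ∈ Icc 2 N,
        |(m t + if t ≤ k then ε else 0) - (m (t - 1) + if t - 1 ≤ k then ε else 0)|
      = ∑ t ∈ Icc 2 N, |m t - m (t - 1) - if t = k + 1 then ε else 0| := by
    refine sum_congr rfl fun t ht => ?_
    obtain ⟨ht2, -⟩ := mem_Icc.1 ht
    congr 1
    split_ifs <;> first | (exfalso; omega) | ring
  unfold flsaObjective
  rw [hsq, htv, sum_sub_distrib (s := Icc 2 N)]
  ring

theorem nonneg_of_isMinimizer_flsaObjective
    (hmin : ∀ g, flsaObjective N lam y m ≤ flsaObjective N lam y g) {k : ℕ} (hk : k ≤ N)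
    (ε : ℝ) :
    0 ≤ ε * ∑ j ∈ Icc 1 k, (m j - y j) + k / 2 * ε ^ 2
      + lam * (if k + 1 ∈ Icc 2 N then |m (k + 1) - m k - ε| - |m (k + 1) - m k| else 0) := by
  have h := hmin fun j => m j + if j ≤ k then ε else 0
  rw [flsaObjective_add_prefix hk, sum_abs_sub_ite_sub_abs (Icc 2 N) (fun t => m t - m (t - 1)),
    Nat.add_sub_cancel] at h
  linarith

end Objective

theorem stmt2_general (N : ℕ) (y m : ℕ → ℝ) (lam : ℝ) (hlam : 0 < lam) :
    (∀ g : ℕ → ℝ,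
      (1 / 2) * ∑ t ∈ Icc 1 N, (y t - m t) ^ 2 + lam * ∑ t ∈ Icc 2 N, |m t - m (t - 1)|
        ≤ (1 / 2) * ∑ t ∈ Icc 1 N, (y t - g t) ^ 2 + lam * ∑ t ∈ Icc 2 N, |g t - g (t - 1)|)
    ↔ ((∀ k, 1 ≤ k → k ≤ N - 1 → |∑ t ∈ Icc 1 k, (m t - y t)| ≤ lam) ∧
       (∑ t ∈ Icc 1 N, m t = ∑ t ∈ Icc 1 N, y t) ∧
       (∀ t, 2 ≤ t → t ≤ N → m t ≠ m (t - 1) →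
         ∑ j ∈ Icc 1 (t - 1), (m j - y j) = lam * Real.sign (m t - m (t - 1)))) := by
  constructor
  · intro hmin
    have hpert := fun k (hk : k ≤ N) ε => nonneg_of_isMinimizer_flsaObjective hmin hk ε
    refine ⟨fun k hk1 hkN => ?_, ?_, fun t ht2 htN hne => ?_⟩
    · refine abs_le_of_forall_nonneg_mul_add_sq_add_abs (c := k / 2) (a := m (k + 1) - m k)
        hlam.le fun ε => ?_
      simpa only [if_pos (mem_Icc.2 ⟨by omega, by omega⟩ : k + 1 ∈ Icc 2 N)]
        using hpert k (by omega) ε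
    · have hz := eq_zero_of_forall_nonneg_mul_add_sq fun ε => by
        simpa only [if_neg (by simp : N + 1 ∉ Icc 2 N), mul_zero, add_zero]
          using hpert N le_rfl ε
      rwa [sum_sub_distrib, sub_eq_zero] at hz
    · obtain ⟨k, rfl⟩ : ∃ k, t = k + 1 := ⟨t - 1, by omega⟩
      rw [Nat.add_sub_cancel] at hne ⊢
      refine eq_mul_sign_of_forall_nonneg_mul_add_sq_add_abs (c := k / 2) hlam.le
        (sub_ne_zero.2 hne) fun ε => ?_
      simpa only [if_pos (mem_Icc.2 ⟨by omega, htN⟩ : k + 1 ∈ Icc 2 N)]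
        using hpert k (by omega) ε
  · rintro ⟨hbound, hsum, hsign⟩ g
    exact flsaObjective_le_of_kkt hbound hsum hsign g

/-- KKT characterization of FLSA minimizers (1-indexed data `y 1, …, y N`). -/
theorem stmt2 (N : ℕ) (hN : 1 ≤ N) (y m : ℕ → ℝ) (lam : ℝ) (hlam : 0 < lam) :
    (∀ g : ℕ → ℝ,
      (1 / 2) * ∑ t ∈ Icc 1 N, (y t - m t) ^ 2 + lam * ∑ t ∈ Icc 2 N, |m t - m (t - 1)|
        ≤ (1 / 2) * ∑ t ∈ Icc 1 N, (y t - g t) ^ 2 + lam * ∑ t ∈ Icc 2 N, |g t - g (t - 1)|)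
    ↔ ((∀ k, 1 ≤ k → k ≤ N - 1 → |∑ t ∈ Icc 1 k, (m t - y t)| ≤ lam) ∧
       (∑ t ∈ Icc 1 N, m t = ∑ t ∈ Icc 1 N, y t) ∧
       (∀ t, 2 ≤ t → t ≤ N → m t ≠ m (t - 1) →
         ∑ j ∈ Icc 1 (t - 1), (m j - y j) = lam * Real.sign (m t - m (t - 1)))) :=
  stmt2_general N y m lam hlam
end

section
/- Let y ∈ R^N, let m̂ = (1/N)∑_{j=1}^N y_j, and define λ_max = max_{1≤k≤N−1} |∑_{j=1}^k (m̂ − y_j)|. If λ ≥ λ_max, then the constant vector m with m_t = m̂ for all t minimizes (1/2)∑_{t=1}^N (y_t − m_t)^2 + λ ∑_{t=2}^N |m_t − m_{t−1}|. -/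
/-!
The quadratic part of the objective dominates its linearization at the constant vector `m̂`, so
it suffices to bound the linear term `∑ (m̂ - y t) (g t - m̂)` from below. Summing by parts, and
using that the residuals `m̂ - y t` sum to zero, it equals `∑ S_k (g k - g (k + 1))` with the
partial sums `S_k` of the residuals, and `|S_k| ≤ λ` bounds it by `λ` times the total variation
of `g`.
-/

open Finset
open scoped BigOperators

theorem sum_Icc_mul_eq_sum_partialSum_mul_sub {R : Type*} [CommRing R] (a d : ℕ → R) (n : ℕ) :
    ∑ t ∈ Icc 1 n, a t * d t
      = ∑ t ∈ Icc 1 (n - 1), (∑ j ∈ Icc 1 t, a j) * (d t - d (t + 1))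
        + (∑ j ∈ Icc 1 n, a j) * d n := by
  induction n with
  | zero => simp
  | succ n ih =>
    rw [sum_Icc_succ_top (by omega), ih, sum_Icc_succ_top (by omega) a, Nat.add_sub_cancel]
    cases n with
    | zero => simp
    | succ m =>
      rw [Nat.add_sub_cancel, sum_Icc_succ_top (by omega)
        (fun t => (∑ j ∈ Icc 1 t, a j) * (d t - d (t + 1)))]
      ring

theorem abs_sum_Icc_mul_le_of_abs_partialSum_le (a d : ℕ → ℝ) (n : ℕ) (lam : ℝ)
    (hsum : ∑ j ∈ Icc 1 n, a j = 0)
    (hpartial : ∀ k, 1 ≤ k → k ≤ n - 1 → |∑ j ∈ Icc 1 k, a j| ≤ lam) :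
    |∑ t ∈ Icc 1 n, a t * d t| ≤ lam * ∑ t ∈ Icc 1 (n - 1), |d (t + 1) - d t| := by
  rw [sum_Icc_mul_eq_sum_partialSum_mul_sub, hsum, zero_mul, add_zero, mul_sum]
  refine (abs_sum_le_sum_abs _ _).trans (sum_le_sum fun t ht => ?_)
  obtain ⟨ht1, htn⟩ := mem_Icc.mp ht
  rw [abs_mul, abs_sub_comm (d t)]
  exact mul_le_mul_of_nonneg_right (hpartial t ht1 htn) (abs_nonneg _)

theorem sum_Icc_two_abs_sub_pred (g : ℕ → ℝ) (n : ℕ) :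
    ∑ t ∈ Icc 2 n, |g t - g (t - 1)| = ∑ t ∈ Icc 1 (n - 1), |g (t + 1) - g t| := by
  rcases n with _ | n
  · rfl
  rw [Nat.add_sub_cancel, show Icc 2 (n + 1) = (Icc 1 n).image (· + 1) from
    (image_add_right_Icc 1 n 1).symm, sum_image fun _ _ _ _ h => by omega]
  simp

theorem sum_expect_sub_eq_zero {ι : Type*} (s : Finset ι) (y : ι → ℝ) :
    ∑ j ∈ s, (𝔼 i ∈ s, y i - y j) = 0 := by
  rw [sum_sub_distrib, sum_const, card_smul_expect, sub_self]

theorem sum_sq_sub_add_two_mul_le {ι : Type*} (s : Finset ι) (y g : ι → ℝ) (c : ℝ) :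
    ∑ t ∈ s, (y t - c) ^ 2 + 2 * ∑ t ∈ s, (c - y t) * (g t - c)
      ≤ ∑ t ∈ s, (y t - g t) ^ 2 := by
  rw [mul_sum, ← sum_add_distrib]
  exact sum_le_sum fun t _ => by nlinarith [sq_nonneg (g t - c)]

theorem stmt3_general (N : ℕ) (y : ℕ → ℝ) (lam mhat : ℝ)
    (hmhat : mhat = (1 / (N : ℝ)) * ∑ j ∈ Icc 1 N, y j)
    (hlammax : ∀ k, 1 ≤ k → k ≤ N - 1 → |∑ j ∈ Icc 1 k, (mhat - y j)| ≤ lam) :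
    ∀ g : ℕ → ℝ,
      (1 / 2) * ∑ t ∈ Icc 1 N, (y t - mhat) ^ 2 + lam * ∑ t ∈ Icc 2 N, |mhat - mhat|
        ≤ (1 / 2) * ∑ t ∈ Icc 1 N, (y t - g t) ^ 2 + lam * ∑ t ∈ Icc 2 N, |g t - g (t - 1)| := by
  intro g
  have hmean : mhat = 𝔼 i ∈ Icc 1 N, y i := by
    rw [hmhat, expect_eq_sum_div_card, Nat.card_Icc, Nat.add_sub_cancel, one_div_mul_eq_div]
  have hresidual : ∑ j ∈ Icc 1 N, (mhat - y j) = 0 := hmean ▸ sum_expect_sub_eq_zero _ y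
  have hlinear := abs_sum_Icc_mul_le_of_abs_partialSum_le (fun t => mhat - y t)
    (fun t => g t - mhat) N lam hresidual hlammax
  simp only [sub_sub_sub_cancel_right] at hlinear
  have hquadratic := sum_sq_sub_add_two_mul_le (Icc 1 N) y g mhat
  simp only [sub_self, abs_zero, sum_const_zero, mul_zero, add_zero]
  rw [sum_Icc_two_abs_sub_pred]
  linarith [neg_abs_le (∑ t ∈ Icc 1 N, (mhat - y t) * (g t - mhat))]

/-- if `λ ≥ λ_max = max_{1≤k≤N-1} |∑_{j=1}^k (m̂ - y_j)|` then the constant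
vector equal to the empirical mean `m̂` minimizes the FLSA objective. -/
theorem stmt3 (N : ℕ) (hN : 1 ≤ N) (y : ℕ → ℝ) (lam mhat : ℝ) (hlam : 0 < lam)
    (hmhat : mhat = (1 / (N : ℝ)) * ∑ j ∈ Icc 1 N, y j)
    (hlammax : ∀ k, 1 ≤ k → k ≤ N - 1 → |∑ j ∈ Icc 1 k, (mhat - y j)| ≤ lam) :
    ∀ g : ℕ → ℝ,
      (1 / 2) * ∑ t ∈ Icc 1 N, (y t - mhat) ^ 2 + lam * ∑ t ∈ Icc 2 N, |mhat - mhat|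
        ≤ (1 / 2) * ∑ t ∈ Icc 1 N, (y t - g t) ^ 2 + lam * ∑ t ∈ Icc 2 N, |g t - g (t - 1)| :=
  stmt3_general N y lam mhat hmhat hlammax
end

section
/- Suppose m ∈ R^N is an optimal solution of the fused lasso objective (1/2)∑_{t=1}^N (y_t − m_t)^2 + λ ∑_{t=2}^N |m_t − m_{t−1}|, with transition times 1 = t_0 < t_1 < ⋯ < t_{M−1} ≤ N (the indices t where m_t ≠ m_{t−1}) and signs s_k = sgn(m_{t_k} − m_{t_{k−1}}). Then m_1 = (1/(t_1 − 1)) ∑_{t=1}^{t_1 − 1} y_t + λ s_1/(t_1 − 1), and for k = 1,…,M−1, m_{t_k} = (1/(t_{k+1} − t_k)) ∑_{t=t_k}^{t_{k+1}−1} y_t + λ(s_{k+1} − s_k)/(t_{k+1} − t_k), where t_M := N+1 and s_M := 0. -/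
/-!
At a minimiser `m`, perturb `m` by `e` on one constancy segment `[a, b)`. For small `e` the
total-variation term is affine in `e`: only the jumps at `a` and `b` move, and they are nonzero,
so `|m a - m (a - 1) + e| = |m a - m (a - 1)| + sgn (m a - m (a - 1)) e` and similarly at `b`.
The objective is therefore a quadratic polynomial in `e` near `0` with a local minimum at `0`,
so its derivative `(b - a) m a - ∑_{[a, b)} y + λ (sgn-jump at a - sgn-jump at b)` vanishes.
-/

open Finset Filter Topology

theorem eventually_abs_add_mul_eq (d c : ℝ) (h : c ≠ 0 → d ≠ 0) :
    ∀ᶠ e in 𝓝 (0 : ℝ), |d + c * e| = |d| + Real.sign d * c * e := by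
  have hlim : Tendsto (fun e : ℝ => d + c * e) (𝓝 0) (𝓝 d) := by
    have hcont : Continuous (fun e : ℝ => d + c * e) := by fun_prop
    simpa using hcont.tendsto 0
  rcases lt_trichotomy d 0 with hd | hd | hd
  · filter_upwards [hlim.eventually (gt_mem_nhds hd)] with e he
    rw [abs_of_neg he, abs_of_neg hd, Real.sign_of_neg hd]
    ring
  · have hc : c = 0 := by
      by_contra hc
      exact h hc hd
    simp [hc]
  · filter_upwards [hlim.eventually (lt_mem_nhds hd)] with e he
    rw [abs_of_pos he, abs_of_pos hd, Real.sign_of_pos hd]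
    ring

noncomputable def fusedLasso (N : ℕ) (y : ℕ → ℝ) (lam : ℝ) (g : ℕ → ℝ) : ℝ :=
  (1 / 2) * ∑ u ∈ Icc 1 N, (y u - g u) ^ 2 + lam * ∑ u ∈ Icc 2 N, |g u - g (u - 1)|

theorem fusedLasso_add_smul_eventually_eq {N : ℕ} {y m : ℕ → ℝ} (lam : ℝ) (v : ℕ → ℝ)
    (hv : ∀ u ∈ Icc 2 N, v u ≠ v (u - 1) → m u ≠ m (u - 1)) :
    ∀ᶠ e in 𝓝 (0 : ℝ), fusedLasso N y lam (m + e • v) = fusedLasso N y lam m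
      + ((∑ u ∈ Icc 1 N, (m u - y u) * v u
          + lam * ∑ u ∈ Icc 2 N, Real.sign (m u - m (u - 1)) * (v u - v (u - 1))) * e
        + (1 / 2) * (∑ u ∈ Icc 1 N, v u ^ 2) * e ^ 2) := by
  have htv : ∀ᶠ e in 𝓝 (0 : ℝ), ∀ u ∈ Icc 2 N,
      |(m + e • v) u - (m + e • v) (u - 1)|
        = |m u - m (u - 1)| + Real.sign (m u - m (u - 1)) * (v u - v (u - 1)) * e := by
    refine (eventually_all_finset _).2 fun u hu => ?_
    filter_upwards [eventually_abs_add_mul_eq (m u - m (u - 1)) (v u - v (u - 1))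
      fun h => sub_ne_zero.2 (hv u hu (sub_ne_zero.1 h))] with e he
    rw [← he]
    simp only [Pi.add_apply, Pi.smul_apply, smul_eq_mul]
    ring_nf
  have hfit : ∀ e : ℝ, ∑ u ∈ Icc 1 N, (y u - (m + e • v) u) ^ 2
      = ∑ u ∈ Icc 1 N, (y u - m u) ^ 2 + 2 * (∑ u ∈ Icc 1 N, (m u - y u) * v u) * e
        + (∑ u ∈ Icc 1 N, v u ^ 2) * e ^ 2 := fun e => by
    simp only [mul_sum, sum_mul, ← sum_add_distrib, Pi.add_apply, Pi.smul_apply, smul_eq_mul]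
    exact sum_congr rfl fun u _ => by ring
  filter_upwards [htv] with e he
  rw [fusedLasso, fusedLasso, hfit, sum_congr rfl he, sum_add_distrib, ← sum_mul]
  ring

theorem fusedLasso_deriv_eq_zero {N : ℕ} {y m : ℕ → ℝ} {lam : ℝ}
    (hmin : ∀ g, fusedLasso N y lam m ≤ fusedLasso N y lam g) (v : ℕ → ℝ)
    (hv : ∀ u ∈ Icc 2 N, v u ≠ v (u - 1) → m u ≠ m (u - 1)) :
    ∑ u ∈ Icc 1 N, (m u - y u) * v u
      + lam * ∑ u ∈ Icc 2 N, Real.sign (m u - m (u - 1)) * (v u - v (u - 1)) = 0 := by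
  set A := ∑ u ∈ Icc 1 N, (m u - y u) * v u
      + lam * ∑ u ∈ Icc 2 N, Real.sign (m u - m (u - 1)) * (v u - v (u - 1))
  set c := (1 / 2) * ∑ u ∈ Icc 1 N, v u ^ 2
  have hloc : IsLocalMin (fun e : ℝ => A * e + c * e ^ 2) 0 := by
    filter_upwards [fusedLasso_add_smul_eventually_eq lam v hv] with e he
    have hle := hmin (m + e • v)
    rw [he, le_add_iff_nonneg_right] at hle
    exact (by ring : A * 0 + c * 0 ^ 2 = 0).trans_le hle
  have hderiv : HasDerivAt (fun e : ℝ => A * e + c * e ^ 2) A 0 := by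
    simpa using ((hasDerivAt_id (0 : ℝ)).const_mul A).fun_add
      (((hasDerivAt_id (0 : ℝ)).pow 2).const_mul c)
  exact hloc.hasDerivAt_eq_zero hderiv

/-- The paper's sign `s k` at `u = t k`, extended by `0` at `u = 1` and `u = N + 1`. -/
noncomputable def jumpSign (N : ℕ) (m : ℕ → ℝ) (u : ℕ) : ℝ :=
  if u ∈ Icc 2 N then Real.sign (m u - m (u - 1)) else 0

theorem ite_mem_Ico_sub_ite_mem_Ico_pred {a b u : ℕ} (hab : a ≤ b) (hu : u ≠ 0) :
    ((if u ∈ Ico a b then 1 else 0) - (if u - 1 ∈ Ico a b then 1 else 0) : ℝ)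
      = (if u = a then 1 else 0) - (if u = b then 1 else 0) := by
  simp only [mem_Ico]
  split_ifs <;> norm_num <;> omega

theorem fusedLasso_segment_eq {N : ℕ} {y m : ℕ → ℝ} {lam : ℝ}
    (hmin : ∀ g, fusedLasso N y lam m ≤ fusedLasso N y lam g) {a b : ℕ} (ha : 1 ≤ a)
    (hab : a ≤ b) (hb : b ≤ N + 1) (hconst : ∀ u ∈ Ico a b, m u = m a)
    (hjump_a : a ∈ Icc 2 N → m a ≠ m (a - 1)) (hjump_b : b ∈ Icc 2 N → m b ≠ m (b - 1)) :
    ((b : ℝ) - a) * m a = ∑ u ∈ Ico a b, y u + lam * (jumpSign N m b - jumpSign N m a) := by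
  set v : ℕ → ℝ := fun u => if u ∈ Ico a b then 1 else 0
  have hdiff : ∀ u ∈ Icc 2 N,
      v u - v (u - 1) = (if u = a then 1 else 0) - (if u = b then 1 else 0) := fun u hu =>
    ite_mem_Ico_sub_ite_mem_Ico_pred hab (by rw [mem_Icc] at hu; omega)
  have hv : ∀ u ∈ Icc 2 N, v u ≠ v (u - 1) → m u ≠ m (u - 1) := by
    intro u hu hne
    rw [← sub_ne_zero, hdiff u hu] at hne
    by_cases hua : u = a
    · exact hua ▸ hjump_a (hua ▸ hu)
    by_cases hub : u = b
    · exact hub ▸ hjump_b (hub ▸ hu)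
    simp [hua, hub] at hne
  have hfit : ∑ u ∈ Icc 1 N, (m u - y u) * v u = ((b : ℝ) - a) * m a - ∑ u ∈ Ico a b, y u := by
    have hsub : Ico a b ⊆ Icc 1 N := fun u hu => by
      rw [mem_Ico] at hu
      rw [mem_Icc]
      omega
    simp only [v, mul_ite, mul_one, mul_zero]
    rw [sum_ite_mem, inter_eq_right.2 hsub, sum_sub_distrib, sum_congr rfl hconst, sum_const,
      Nat.card_Ico, nsmul_eq_mul, Nat.cast_sub hab]
  have htv : ∑ u ∈ Icc 2 N, Real.sign (m u - m (u - 1)) * (v u - v (u - 1))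
      = jumpSign N m a - jumpSign N m b := by
    rw [sum_congr rfl fun u hu => by rw [hdiff u hu]]
    simp only [mul_sub, mul_ite, mul_one, mul_zero, sum_sub_distrib, sum_ite_eq', jumpSign]
  have hstat := fusedLasso_deriv_eq_zero hmin v hv
  rw [hfit, htv] at hstat
  linear_combination hstat

theorem eq_of_forall_eq_pred_of_mem_Ico {α : Type*} {m : ℕ → α} {a b : ℕ}
    (h : ∀ j, a < j → j < b → m j = m (j - 1)) : ∀ j ∈ Ico a b, m j = m a := by
  intro j hj
  obtain ⟨haj, hjb⟩ := mem_Ico.1 hj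
  clear hj
  induction j, haj using Nat.le_induction with
  | base => rfl
  | succ n hn ih => rw [h (n + 1) (by omega) hjb, Nat.add_sub_cancel, ih (by omega)]

section Transitions

variable {N M : ℕ} {m : ℕ → ℝ} {t : ℕ → ℕ}

theorem one_le_transition (hsm : StrictMonoOn t (Set.Iic M)) (ht0 : t 0 = 1) {k : ℕ}
    (hk : k ≤ M) : 1 ≤ t k :=
  ht0 ▸ hsm.monotoneOn (Set.mem_Iic.2 (Nat.zero_le M)) (Set.mem_Iic.2 hk) (Nat.zero_le k)

theorem transition_le (hsm : StrictMonoOn t (Set.Iic M)) (htM : t M = N + 1) {k : ℕ}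
    (hk : k ≤ M) : t k ≤ N + 1 :=
  htM ▸ hsm.monotoneOn (Set.mem_Iic.2 hk) (Set.mem_Iic.2 le_rfl) hk

theorem eq_of_mem_Ico_of_transitions (hsm : StrictMonoOn t (Set.Iic M))
    (htrans : ∀ j, 2 ≤ j → j ≤ N →
      (m j ≠ m (j - 1) ↔ ∃ k, 1 ≤ k ∧ k ≤ M - 1 ∧ t k = j))
    {k : ℕ} (hk : k < M) (hpos : 1 ≤ t k) (hle : t (k + 1) ≤ N + 1) :
    ∀ j ∈ Ico (t k) (t (k + 1)), m j = m (t k) := by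
  refine eq_of_forall_eq_pred_of_mem_Ico fun j hkj hjk => ?_
  by_contra hne
  obtain ⟨k', -, hk', rfl⟩ := (htrans j (by omega) (by omega)).1 hne
  have h₁ := (hsm.lt_iff_lt (Set.mem_Iic.2 hk.le) (Set.mem_Iic.2 (by omega))).1 hkj
  have h₂ := (hsm.lt_iff_lt (Set.mem_Iic.2 (by omega)) (Set.mem_Iic.2 hk)).1 hjk
  omega

theorem ne_pred_of_transition (ht0 : t 0 = 1) (htM : t M = N + 1)
    (htrans : ∀ j, 2 ≤ j → j ≤ N →
      (m j ≠ m (j - 1) ↔ ∃ k, 1 ≤ k ∧ k ≤ M - 1 ∧ t k = j))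
    {k : ℕ} (hk : k ≤ M) (hmem : t k ∈ Icc 2 N) : m (t k) ≠ m (t k - 1) := by
  rw [mem_Icc] at hmem
  have hk0 : k ≠ 0 := by rintro rfl; omega
  have hkM : k ≠ M := by rintro rfl; omega
  exact (htrans (t k) hmem.1 hmem.2).2 ⟨k, by omega, by omega, rfl⟩

theorem jumpSign_transition (hsm : StrictMonoOn t (Set.Iic M)) (ht0 : t 0 = 1)
    (htM : t M = N + 1)
    (htrans : ∀ j, 2 ≤ j → j ≤ N →
      (m j ≠ m (j - 1) ↔ ∃ k, 1 ≤ k ∧ k ≤ M - 1 ∧ t k = j))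
    {s : ℕ → ℝ} (hs : ∀ k, 1 ≤ k → k ≤ M - 1 → s k = Real.sign (m (t k) - m (t (k - 1))))
    {k : ℕ} (hk1 : 1 ≤ k) (hk : k ≤ M - 1) : jumpSign N m (t k) = s k := by
  have hsucc : k - 1 + 1 = k := Nat.sub_add_cancel hk1
  have hprev_lt := (hsm.lt_iff_lt (Set.mem_Iic.2 (by omega)) (Set.mem_Iic.2 (by omega))).2
    (Nat.sub_one_lt_of_le hk1 le_rfl)
  have hlt_M := (hsm.lt_iff_lt (Set.mem_Iic.2 (by omega)) (Set.mem_Iic.2 le_rfl)).2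
    (show k < M by omega)
  have hprev_pos := one_le_transition hsm ht0 (show k - 1 ≤ M by omega)
  have hprev : m (t k - 1) = m (t (k - 1)) :=
    eq_of_mem_Ico_of_transitions hsm htrans (by omega) hprev_pos (by rw [hsucc]; omega)
      (t k - 1) (mem_Ico.2 ⟨by omega, by rw [hsucc]; omega⟩)
  rw [jumpSign, if_pos (mem_Icc.2 ⟨by omega, by omega⟩), hs k hk1 hk, hprev]

theorem jumpSign_succ_transition (hsm : StrictMonoOn t (Set.Iic M)) (ht0 : t 0 = 1)
    (htM : t M = N + 1)
    (htrans : ∀ j, 2 ≤ j → j ≤ N →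
      (m j ≠ m (j - 1) ↔ ∃ k, 1 ≤ k ∧ k ≤ M - 1 ∧ t k = j))
    {s : ℕ → ℝ} (hs : ∀ k, 1 ≤ k → k ≤ M - 1 → s k = Real.sign (m (t k) - m (t (k - 1))))
    (hsM : s M = 0) {k : ℕ} (hk : k < M) : jumpSign N m (t (k + 1)) = s (k + 1) := by
  rcases Nat.lt_or_ge (k + 1) M with hkM | hkM
  · exact jumpSign_transition hsm ht0 htM htrans hs (by omega) (by omega)
  · rw [show k + 1 = M by omega, htM, hsM]
    simp [jumpSign]

theorem fusedLasso_transition_segment_eq {y : ℕ → ℝ} {lam : ℝ}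
    (hmin : ∀ g, fusedLasso N y lam m ≤ fusedLasso N y lam g)
    (hsm : StrictMonoOn t (Set.Iic M)) (ht0 : t 0 = 1) (htM : t M = N + 1)
    (htrans : ∀ j, 2 ≤ j → j ≤ N →
      (m j ≠ m (j - 1) ↔ ∃ k, 1 ≤ k ∧ k ≤ M - 1 ∧ t k = j))
    {s : ℕ → ℝ} (hs : ∀ k, 1 ≤ k → k ≤ M - 1 → s k = Real.sign (m (t k) - m (t (k - 1))))
    (hsM : s M = 0) {k : ℕ} (hk : k < M) :
    ((t (k + 1) : ℝ) - t k) * m (t k)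
      = ∑ j ∈ Ico (t k) (t (k + 1)), y j + lam * (s (k + 1) - jumpSign N m (t k)) := by
  rw [← jumpSign_succ_transition hsm ht0 htM htrans hs hsM hk]
  exact fusedLasso_segment_eq hmin (one_le_transition hsm ht0 hk.le)
    (hsm.monotoneOn (Set.mem_Iic.2 hk.le) (Set.mem_Iic.2 hk) (Nat.le_succ k))
    (transition_le hsm htM hk)
    (eq_of_mem_Ico_of_transitions hsm htrans hk (one_le_transition hsm ht0 hk.le)
      (transition_le hsm htM hk))
    (ne_pred_of_transition ht0 htM htrans hk.le)
    (ne_pred_of_transition ht0 htM htrans hk)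

end Transitions

theorem stmt4_general (N M : ℕ) (hM : 1 ≤ M)
    (y m : ℕ → ℝ) (lam : ℝ)
    (hmin : ∀ g : ℕ → ℝ,
      (1 / 2) * ∑ u ∈ Icc 1 N, (y u - m u) ^ 2 + lam * ∑ u ∈ Icc 2 N, |m u - m (u - 1)|
        ≤ (1 / 2) * ∑ u ∈ Icc 1 N, (y u - g u) ^ 2 + lam * ∑ u ∈ Icc 2 N, |g u - g (u - 1)|)
    (t : ℕ → ℕ) (ht0 : t 0 = 1) (htM : t M = N + 1)
    (hmono : ∀ k, k < M → t k < t (k + 1))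
    (htrans : ∀ j, 2 ≤ j → j ≤ N →
      (m j ≠ m (j - 1) ↔ ∃ k, 1 ≤ k ∧ k ≤ M - 1 ∧ t k = j))
    (s : ℕ → ℝ)
    (hs : ∀ k, 1 ≤ k → k ≤ M - 1 → s k = Real.sign (m (t k) - m (t (k - 1))))
    (hsM : s M = 0) :
    m 1 = (1 / ((t 1 : ℝ) - 1)) * ∑ j ∈ Icc 1 (t 1 - 1), y j + lam * s 1 / ((t 1 : ℝ) - 1)
    ∧ ∀ k, 1 ≤ k → k ≤ M - 1 →
      m (t k) = (1 / ((t (k + 1) : ℝ) - (t k : ℝ))) * ∑ j ∈ Ico (t k) (t (k + 1)), y j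
        + lam * (s (k + 1) - s k) / ((t (k + 1) : ℝ) - (t k : ℝ)) := by
  have hsm : StrictMonoOn t (Set.Iic M) := strictMonoOn_Iic_of_lt_succ hmono
  have hlen : ∀ k < M, ((t (k + 1) : ℝ) - t k) ≠ 0 := fun k hk =>
    sub_ne_zero.2 (Nat.cast_injective.ne (hmono k hk).ne')
  refine ⟨?_, fun k hk1 hk => ?_⟩
  · have h₀ := fusedLasso_transition_segment_eq hmin hsm ht0 htM htrans hs hsM hM
    have h₁ := hlen 0 hM
    rw [ht0, Nat.cast_one] at h₀ h₁
    rw [Icc_sub_one_right_eq_Ico_of_not_isMin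
      (by simpa using Nat.one_le_iff_ne_zero.1 (one_le_transition hsm ht0 hM))]
    simp only [jumpSign, mem_Icc, Nat.not_ofNat_le_one, false_and, if_false] at h₀
    field_simp [h₁]
    linear_combination h₀
  · have h₀ := fusedLasso_transition_segment_eq hmin hsm ht0 htM htrans hs hsM (by omega : k < M)
    rw [jumpSign_transition hsm ht0 htM htrans hs hk1 hk] at h₀
    field_simp [hlen k (by omega)]
    linear_combination h₀

/-- explicit form of the FLSA solution given the transition times
`1 = t 0 < t 1 < ⋯ < t (M-1) ≤ N` (with the convention `t M = N + 1`) and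
transition signs `s k = sgn(m_{t_k} - m_{t_{k-1}})`, `s M = 0` (1-indexed data). -/
theorem stmt4 (N M : ℕ) (hN : 1 ≤ N) (hM : 1 ≤ M)
    (y m : ℕ → ℝ) (lam : ℝ) (hlam : 0 < lam)
    (hmin : ∀ g : ℕ → ℝ,
      (1 / 2) * ∑ u ∈ Icc 1 N, (y u - m u) ^ 2 + lam * ∑ u ∈ Icc 2 N, |m u - m (u - 1)|
        ≤ (1 / 2) * ∑ u ∈ Icc 1 N, (y u - g u) ^ 2 + lam * ∑ u ∈ Icc 2 N, |g u - g (u - 1)|)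
    (t : ℕ → ℕ) (ht0 : t 0 = 1) (htM : t M = N + 1) (htN : t (M - 1) ≤ N)
    (hmono : ∀ k, k < M → t k < t (k + 1))
    (htrans : ∀ j, 2 ≤ j → j ≤ N →
      (m j ≠ m (j - 1) ↔ ∃ k, 1 ≤ k ∧ k ≤ M - 1 ∧ t k = j))
    (s : ℕ → ℝ)
    (hs : ∀ k, 1 ≤ k → k ≤ M - 1 → s k = Real.sign (m (t k) - m (t (k - 1))))
    (hsM : s M = 0) :
    m 1 = (1 / ((t 1 : ℝ) - 1)) * ∑ j ∈ Icc 1 (t 1 - 1), y j + lam * s 1 / ((t 1 : ℝ) - 1)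
    ∧ ∀ k, 1 ≤ k → k ≤ M - 1 →
      m (t k) = (1 / ((t (k + 1) : ℝ) - (t k : ℝ))) * ∑ j ∈ Ico (t k) (t (k + 1)), y j
        + lam * (s (k + 1) - s k) / ((t (k + 1) : ℝ) - (t k : ℝ)) :=
  stmt4_general N M hM y m lam hmin t ht0 htM hmono htrans s hs hsM
end

section
/- Let x_1,…,x_n be exchangeable real-valued random variables with continuous joint distribution, and define u_k = ∑_{i=1}^k x_i − (k/n)∑_{i=1}^n x_i for k = 1,…,n. Then for each r ∈ {0,1,…,n−1}, the probability that exactly r of the values u_1,…,u_n are positive equals 1/n. -/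
/-!
Let `S` be the `n`-periodic extension of `k ↦ u k`. The bridge of the sequence rotated by `c` is
`k ↦ S (c + k) - S c`, so its number of positive values is the number of `j < n` with
`S j > S c`, the rank of `S c`. Without ties these ranks are a permutation of `0, …, n - 1`, so
exactly one of the `n` rotations has exactly `r` positive values. By exchangeability every
rotation has the same law as the original sequence, so each of these `n` events has
probability `1 / n`.
-/

open Finset MeasureTheory

section Bridge

variable {n : ℕ}

noncomputable def bridge (v : Fin n → ℝ) (k : ℕ) : ℝ :=
  (∑ i ∈ univ.filter (fun i : Fin n => (i : ℕ) + 1 ≤ k), v i) - ((k : ℝ) / n) * ∑ i, v i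

noncomputable def numPosBridge (v : Fin n → ℝ) : ℕ :=
  ((Icc 1 n).filter (fun k => 0 < bridge v k)).card

lemma measurable_bridge (k : ℕ) : Measurable fun v : Fin n → ℝ => bridge v k := by
  unfold bridge
  fun_prop

lemma measurable_numPosBridge : Measurable (numPosBridge (n := n)) := by
  have hsum : numPosBridge =
      fun v : Fin n → ℝ => ∑ k ∈ Icc 1 n, if 0 < bridge v k then 1 else 0 :=
    funext fun v => card_filter _ _
  rw [hsum]
  exact Finset.measurable_sum _ fun k _ =>
    Measurable.ite (measurableSet_lt measurable_const (measurable_bridge k))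
      measurable_const measurable_const

open Fin.NatCast

variable [NeZero n]

-- `(j : Fin n)` is `j % n`: the sample is read cyclically.
noncomputable def cyclicBridge (v : Fin n → ℝ) (m : ℕ) : ℝ :=
  ∑ j ∈ range m, v (j : Fin n) - (m / n : ℝ) * ∑ i, v i

lemma bridge_eq_cyclicBridge (v : Fin n → ℝ) {k : ℕ} (hk : k ≤ n) :
    bridge v k = cyclicBridge v k := by
  have hsum : ∑ i ∈ univ.filter (fun i : Fin n => (i : ℕ) + 1 ≤ k), v i =
      ∑ j ∈ range k, v (j : Fin n) := by
    have := Fin.sum_univ_eq_sum_range (fun j => if j + 1 ≤ k then v (j : Fin n) else 0) n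
    simp only [Fin.cast_val_eq_self] at this
    rw [sum_filter, this, ← sum_filter]
    congr 1
    ext j
    simp only [mem_filter, mem_range]
    omega
  rw [bridge, cyclicBridge, hsum]

lemma cyclicBridge_self (v : Fin n → ℝ) : cyclicBridge v n = 0 := by
  rw [cyclicBridge, ← Fin.sum_univ_eq_sum_range (fun j => v (j : Fin n))]
  simp [NeZero.ne n]

lemma cyclicBridge_rotate (v : Fin n → ℝ) (c k : ℕ) :
    cyclicBridge (fun i => v (i + (c : Fin n))) k =
      cyclicBridge v (c + k) - cyclicBridge v c := by
  have hshift : ∑ i, v (i + (c : Fin n)) = ∑ i, v i :=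
    Equiv.sum_comp (Equiv.addRight (c : Fin n)) v
  simp only [cyclicBridge, hshift, sum_range_add, Nat.cast_add, add_comm (c : Fin n)]
  ring

lemma cyclicBridge_periodic (v : Fin n → ℝ) : Function.Periodic (cyclicBridge v) n := by
  intro m
  rw [← sub_eq_zero, ← cyclicBridge_rotate, cyclicBridge_self]

lemma numPosBridge_rotate (v : Fin n → ℝ) (c : Fin n) :
    numPosBridge (fun i => v (i + c)) =
      (univ.filter fun j : Fin n => cyclicBridge v c < cyclicBridge v j).card := by
  have hpos : ∀ k ∈ Icc 1 n, 0 < bridge (fun i => v (i + c)) k ↔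
      cyclicBridge v c < cyclicBridge v (c + k) := fun k hk => by
    rw [bridge_eq_cyclicBridge _ (mem_Icc.1 hk).2, ← Fin.cast_val_eq_self c,
      cyclicBridge_rotate, Fin.cast_val_eq_self, sub_pos]
  have hperiodic : Function.Periodic (fun m => cyclicBridge v c < cyclicBridge v m) n :=
    fun m => by simp only [cyclicBridge_periodic v m]
  rw [numPosBridge, filter_congr hpos, card_filter, ← Ico_add_one_right_eq_Icc,
    sum_Ico_add (fun m => if cyclicBridge v c < cyclicBridge v m then 1 else 0), ← card_filter,
    show n + 1 + c = 1 + c + n by ring, Nat.filter_Ico_card_eq_of_periodic _ _ _ hperiodic,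
    Nat.count_eq_card_filter_range, card_filter, card_filter,
    ← Fin.sum_univ_eq_sum_range (fun m => if cyclicBridge v c < cyclicBridge v m then 1 else 0)]

lemma injective_cyclicBridge {v : Fin n → ℝ}
    (hv : ∀ c : Fin n, ∀ k, 1 ≤ k → k ≤ n - 1 → bridge (fun i => v (i + c)) k ≠ 0) :
    Function.Injective fun j : Fin n => cyclicBridge v j := by
  refine .of_lt_imp_ne fun i j hij => ?_
  have hk : (j : ℕ) - i ≤ n - 1 := by omega
  have := hv i (j - i) (by omega) hk
  rw [bridge_eq_cyclicBridge _ (hk.trans (Nat.sub_le n 1)), ← Fin.cast_val_eq_self i,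
    cyclicBridge_rotate, Fin.cast_val_eq_self, Nat.add_sub_cancel' hij.le] at this
  exact (sub_ne_zero.1 this).symm

end Bridge

lemma existsUnique_card_filter_lt_eq {α β : Type*} [Fintype α] [LinearOrder β] {a : α → β}
    (ha : Function.Injective a) {r : ℕ} (hr : r < Fintype.card α) :
    ∃! c, (univ.filter fun j => a c < a j).card = r := by
  have hlt : ∀ c, (univ.filter fun j => a c < a j).card < Fintype.card α := fun c =>
    card_lt_univ_of_notMem (x := c) (by simp)
  let rank : α → Fin (Fintype.card α) := fun c => ⟨_, hlt c⟩
  have hanti : ∀ c c', a c < a c' → rank c' < rank c := fun c c' h =>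
    card_lt_card <|
      (ssubset_iff_of_subset fun j hj => by simp_all [h.trans]).2 ⟨c', by simp [h]⟩
  have hrank : Function.Injective rank := fun c c' h => by
    by_contra hne
    rcases (ha.ne hne).lt_or_gt with h' | h'
    · exact (hanti _ _ h').ne' h
    · exact (hanti _ _ h').ne h
  have hbij := (Fintype.bijective_iff_injective_and_card rank).2 ⟨hrank, by simp⟩
  simpa [rank, Fin.ext_iff] using hbij.existsUnique ⟨r, hr⟩

lemma existsUnique_numPosBridge_rotate_eq {n : ℕ} [NeZero n] {v : Fin n → ℝ}
    (hv : ∀ c : Fin n, ∀ k, 1 ≤ k → k ≤ n - 1 → bridge (fun i => v (i + c)) k ≠ 0)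
    {r : ℕ} (hr : r < n) :
    ∃! c : Fin n, numPosBridge (fun i => v (i + c)) = r := by
  simp only [numPosBridge_rotate]
  exact existsUnique_card_filter_lt_eq (injective_cyclicBridge hv) (by simpa using hr)

lemma sum_measure_eq_of_ae_existsUnique {Ω ι : Type*} [MeasurableSpace Ω] {μ : Measure Ω}
    [Fintype ι] {E : ι → Set Ω} (hE : ∀ i, NullMeasurableSet (E i) μ)
    (h : ∀ᵐ ω ∂μ, ∃! i, ω ∈ E i) :
    ∑ i, μ (E i) = μ Set.univ := by
  have hdisj : Pairwise (Function.onFun (AEDisjoint μ) E) := fun i j hij => by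
    refine measure_eq_zero_iff_ae_notMem.2 ?_
    filter_upwards [h] with ω ⟨k, _, hk⟩ ⟨hi, hj⟩
    exact hij ((hk i hi).trans (hk j hj).symm)
  have hcover : ⋃ i, E i =ᵐ[μ] (Set.univ : Set Ω) :=
    ae_eq_univ.2 <| measure_eq_zero_iff_ae_notMem.2 <|
      h.mono fun ω ⟨i, hi, _⟩ hω => hω (Set.mem_iUnion.2 ⟨i, hi⟩)
  rw [← measure_congr hcover, measure_iUnion₀ hdisj hE, tsum_fintype]

/-- Sparre Andersen combinatorial lemma from fluctuation theory:
for exchangeable continuous random variables `x 1, …, x n` and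
`u k = ∑_{i=1}^k x i − (k/n) ∑_{i=1}^n x i`, the probability that exactly `r` of
`u 1, …, u n` are positive equals `1/n`, for each `r ∈ {0, …, n−1}`. -/
theorem stmt5 {Ω : Type*} [MeasurableSpace Ω] (μ : Measure Ω) [IsProbabilityMeasure μ]
    (n : ℕ) (hn : 1 ≤ n) (x : Fin n → Ω → ℝ) (hmeas : ∀ i, Measurable (x i))
    (hexch : ∀ σ : Equiv.Perm (Fin n),
      Measure.map (fun ω (i : Fin n) => x (σ i) ω) μ
        = Measure.map (fun ω (i : Fin n) => x i ω) μ)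
    (u : ℕ → Ω → ℝ)
    (hu : ∀ k ω, u k ω =
      (∑ i ∈ univ.filter (fun i : Fin n => (i : ℕ) + 1 ≤ k), x i ω)
        - ((k : ℝ) / (n : ℝ)) * ∑ i, x i ω)
    (hcont : ∀ k, 1 ≤ k → k ≤ n - 1 → μ {ω | u k ω = 0} = 0) :
    ∀ r, r ≤ n - 1 →
      μ {ω | ((Icc 1 n).filter (fun k => 0 < u k ω)).card = r} = 1 / (n : ENNReal) := by
  intro r hr
  have : NeZero n := ⟨by omega⟩
  let X : Ω → Fin n → ℝ := fun ω i => x i ω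
  let Y : Fin n → Ω → Fin n → ℝ := fun c ω i => X ω (i + c)
  have hX : Measurable X := measurable_pi_lambda _ hmeas
  have hY : ∀ c, Measurable (Y c) := fun c => measurable_pi_lambda _ fun i => hmeas _
  have hlaw : ∀ c, μ.map (Y c) = μ.map X := fun c => hexch (Equiv.addRight c)
  have hu' : ∀ k ω, u k ω = bridge (X ω) k := hu
  set A := {v : Fin n → ℝ | numPosBridge v = r}
  have hA : MeasurableSet A := measurable_numPosBridge (measurableSet_singleton r)
  have hnoTies : ∀ᵐ ω ∂μ, ∀ c k, 1 ≤ k → k ≤ n - 1 → bridge (Y c ω) k ≠ 0 := by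
    refine ae_all_iff.2 fun c => ae_all_iff.2 fun k => ?_
    simp only [Filter.eventually_imp_distrib_left]
    intro hk1 hk2
    have hXk : ∀ᵐ v ∂μ.map X, bridge v k ≠ 0 :=
      (ae_map_iff hX.aemeasurable (measurable_bridge k (measurableSet_singleton 0)).compl).2 <|
        ae_iff.2 <| by simpa [hu'] using hcont k hk1 hk2
    exact ae_of_ae_map (hY c).aemeasurable (hlaw c ▸ hXk)
  have hsum := sum_measure_eq_of_ae_existsUnique (E := fun c => Y c ⁻¹' A)
    (fun c => (hY c hA).nullMeasurableSet)
    (hnoTies.mono fun ω h => existsUnique_numPosBridge_rotate_eq h (by omega))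
  have hE : ∀ c, μ (Y c ⁻¹' A) = μ (X ⁻¹' A) := fun c => by
    rw [← Measure.map_apply (hY c) hA, hlaw, Measure.map_apply hX hA]
  simp only [hE, sum_const, card_univ, Fintype.card_fin, nsmul_eq_mul, measure_univ] at hsum
  have htarget : {ω | ((Icc 1 n).filter (fun k => 0 < u k ω)).card = r} = X ⁻¹' A := by
    simp only [hu']
    rfl
  rw [htarget, ENNReal.eq_div_iff (by simp [NeZero.ne n]) (ENNReal.natCast_ne_top n), hsum]
end

section
/- Let b ∈ (0,1) and let Φ denote the standard normal cumulative distribution function. Then ∫_0^∞ x² exp(−x²/(2b)) Φ(x/√(b⁻¹−b)) dx = (b^{3/2}/√(2π)) [π − arctan(√(1−b²)/b) + b√(1−b²)]. -/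
/-!
Write `Φ(x c) = 1/2 + (x/√(2π)) ∫₀ᶜ e^{-(x s)²/2} ds`. The constant `1/2` contributes a Gaussian
second moment. For the rest, Fubini turns the integral into `∫₀ᶜ` of a Gaussian third moment,
`2 v² / (1 + v s²)²` for variance `v`, whose antiderivative `v² s/(1 + v s²) + v √v arctan (s √v)`
produces the arctangent. At `v = b`, `c = √b / √(1 - b²)` one has
`arctan (c √b) = π/2 - arctan (√(1 - b²) / b)`.
-/

open Real MeasureTheory Set Filter

section GaussianMoments

variable {a : ℝ}

lemma integrableOn_Ioi_pow_mul_exp_neg_mul_sq (ha : 0 < a) (n : ℕ) :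
    IntegrableOn (fun x : ℝ => x ^ n * exp (-a * x ^ 2)) (Ioi 0) := by
  refine (integrableOn_rpow_mul_exp_neg_mul_sq ha (s := n)
    (by linarith [n.cast_nonneg (α := ℝ)])).congr_fun (fun x _ => ?_) measurableSet_Ioi
  simp only [rpow_natCast]

lemma integral_Ioi_sq_mul_exp_neg_mul_sq (ha : 0 < a) :
    ∫ x in Ioi (0 : ℝ), x ^ 2 * exp (-a * x ^ 2) = √π / (4 * a * √a) := by
  have h := integral_rpow_mul_exp_neg_mul_rpow (p := 2) (q := 2) two_pos (by norm_num) ha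
  simp only [rpow_ofNat] at h
  rw [h, show ((2 : ℝ) + 1) / 2 = 1 / 2 + 1 by norm_num, Gamma_add_one (by norm_num),
    Gamma_one_half_eq, show -((2 : ℝ) + 1) / 2 = -(1 + 1 / 2) by norm_num, rpow_neg ha.le,
    rpow_add ha, rpow_one, ← sqrt_eq_rpow]
  field_simp
  ring

lemma integral_Ioi_pow_three_mul_exp_neg_mul_sq (ha : 0 < a) :
    ∫ x in Ioi (0 : ℝ), x ^ 3 * exp (-a * x ^ 2) = 1 / (2 * a ^ 2) := by
  have h := integral_rpow_mul_exp_neg_mul_rpow (p := 2) (q := 3) two_pos (by norm_num) ha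
  simp only [rpow_ofNat] at h
  rw [h, show ((3 : ℝ) + 1) / 2 = 2 by norm_num, show -((3 : ℝ) + 1) / 2 = -2 by norm_num,
    rpow_neg ha.le, Gamma_two, rpow_ofNat]
  field_simp

end GaussianMoments

lemma integral_Iic_zero_exp_neg_sq_div_two :
    ∫ t in Iic (0 : ℝ), exp (-t ^ 2 / 2) = √(2 * π) / 2 := by
  have h := integral_comp_neg_Iic (c := 0) (fun t : ℝ => exp (-t ^ 2 / 2))
  simp only [neg_sq, neg_zero] at h
  rw [h]
  convert integral_gaussian_Ioi (1 / 2) using 3 with t <;> ring_nf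

lemma integrable_exp_neg_sq_div_two : Integrable fun t : ℝ => exp (-t ^ 2 / 2) := by
  convert integrable_exp_neg_mul_sq (b := 1 / 2) (by norm_num) using 3 with t
  ring

lemma integral_Iic_mul_exp_neg_sq_div_two (x c : ℝ) :
    ∫ t in Iic (x * c), exp (-t ^ 2 / 2)
      = √(2 * π) / 2 + x * ∫ s in (0 : ℝ)..c, exp (-(x * s) ^ 2 / 2) := by
  have h := intervalIntegral.integral_Iic_sub_Iic (a := 0) (b := x * c)
    integrable_exp_neg_sq_div_two.integrableOn integrable_exp_neg_sq_div_two.integrableOn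
  rw [integral_Iic_zero_exp_neg_sq_div_two, ← mul_zero x,
    ← intervalIntegral.smul_integral_comp_mul_left, smul_eq_mul] at h
  linarith

section ArctanAntiderivative

variable {v : ℝ}

lemma hasDerivAt_sq_mul_div_one_add_mul_sq_add_arctan (hv : 0 < v) (s : ℝ) :
    HasDerivAt (fun s => v ^ 2 * s / (1 + v * s ^ 2) + v * √v * arctan (s * √v))
      (2 * v ^ 2 / (1 + v * s ^ 2) ^ 2) s := by
  have hden : 0 < 1 + v * s ^ 2 := by positivity
  have hq := ((hasDerivAt_id s).const_mul (v ^ 2)).div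
    (((hasDerivAt_pow 2 s).const_mul v).const_add 1) hden.ne'
  have harc := ((hasDerivAt_id s).mul_const √v).arctan.const_mul (v * √v)
  refine (hq.add harc).congr_deriv ?_
  simp only [id, mul_one, one_mul, Nat.cast_ofNat, mul_pow]
  field_simp
  rw [sq_sqrt hv.le]
  ring

lemma integral_two_mul_sq_div_one_add_mul_sq_sq (hv : 0 < v) (c : ℝ) :
    ∫ s in (0 : ℝ)..c, 2 * v ^ 2 / (1 + v * s ^ 2) ^ 2
      = v ^ 2 * c / (1 + v * c ^ 2) + v * √v * arctan (c * √v) := by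
  rw [intervalIntegral.integral_eq_sub_of_hasDerivAt
    (fun s _ => hasDerivAt_sq_mul_div_one_add_mul_sq_add_arctan hv s)]
  · simp
  · exact (continuous_const.div (by fun_prop) fun s => by positivity).intervalIntegrable _ _

end ArctanAntiderivative

section GaussianThirdMomentFubini

variable {v c : ℝ}

lemma exp_neg_sq_div_mul_exp_neg_mul_sq (hv : 0 < v) (x s : ℝ) :
    exp (-x ^ 2 / (2 * v)) * exp (-(x * s) ^ 2 / 2)
      = exp (-((1 + v * s ^ 2) / (2 * v)) * x ^ 2) := by
  rw [← exp_add]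
  congr 1
  field_simp
  ring

lemma integrableOn_Ioi_pow_mul_exp_neg_sq_div (hv : 0 < v) (n : ℕ) :
    IntegrableOn (fun x : ℝ => x ^ n * exp (-x ^ 2 / (2 * v))) (Ioi 0) := by
  convert integrableOn_Ioi_pow_mul_exp_neg_mul_sq (a := (2 * v)⁻¹) (by positivity) n
    using 4 with x
  ring

lemma integrable_pow_three_mul_exp_mul_exp_prod (hv : 0 < v) (c : ℝ) :
    Integrable (fun p : ℝ × ℝ => p.1 ^ 3 * exp (-p.1 ^ 2 / (2 * v)) * exp (-(p.1 * p.2) ^ 2 / 2))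
      ((volume.restrict (Ioi 0)).prod (volume.restrict (Ioc 0 c))) := by
  have h := (integrableOn_Ioi_pow_mul_exp_neg_sq_div hv 3).mul_prod
    (integrable_const (1 : ℝ) (μ := volume.restrict (Ioc 0 c)))
  simp only [mul_one] at h
  refine h.mul_bdd (c := 1) (by fun_prop) (Eventually.of_forall fun p => ?_)
  rw [norm_of_nonneg (exp_pos _).le, exp_le_one_iff]
  nlinarith [sq_nonneg (p.1 * p.2)]

lemma pow_three_mul_exp_mul_intervalIntegral_eq (hc : 0 ≤ c) (x : ℝ) :
    x ^ 3 * exp (-x ^ 2 / (2 * v)) * ∫ s in (0 : ℝ)..c, exp (-(x * s) ^ 2 / 2)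
      = ∫ s in Ioc 0 c, x ^ 3 * exp (-x ^ 2 / (2 * v)) * exp (-(x * s) ^ 2 / 2) := by
  rw [intervalIntegral.integral_of_le hc, integral_const_mul]

lemma integrableOn_Ioi_pow_three_mul_exp_mul_intervalIntegral (hv : 0 < v) (hc : 0 ≤ c) :
    IntegrableOn
      (fun x => x ^ 3 * exp (-x ^ 2 / (2 * v)) * ∫ s in (0 : ℝ)..c, exp (-(x * s) ^ 2 / 2))
      (Ioi 0) := by
  simp_rw [pow_three_mul_exp_mul_intervalIntegral_eq hc]
  exact (integrable_pow_three_mul_exp_mul_exp_prod hv c).integral_prod_left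

lemma integral_Ioi_pow_three_mul_exp_mul_intervalIntegral (hv : 0 < v) (hc : 0 ≤ c) :
    ∫ x in Ioi 0, x ^ 3 * exp (-x ^ 2 / (2 * v)) * ∫ s in (0 : ℝ)..c, exp (-(x * s) ^ 2 / 2)
      = v ^ 2 * c / (1 + v * c ^ 2) + v * √v * arctan (c * √v) := by
  simp_rw [pow_three_mul_exp_mul_intervalIntegral_eq hc]
  rw [integral_integral_swap (integrable_pow_three_mul_exp_mul_exp_prod hv c),
    ← integral_two_mul_sq_div_one_add_mul_sq_sq hv, intervalIntegral.integral_of_le hc]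
  congr 1 with s
  simp_rw [mul_assoc, exp_neg_sq_div_mul_exp_neg_mul_sq hv]
  rw [integral_Ioi_pow_three_mul_exp_neg_mul_sq (by positivity)]
  field_simp

end GaussianThirdMomentFubini

theorem integral_Ioi_sq_mul_exp_neg_sq_div_mul_integral_Iic {v c : ℝ} (hv : 0 < v)
    (hc : 0 ≤ c) :
    ∫ x in Ioi 0, x ^ 2 * exp (-x ^ 2 / (2 * v)) * ∫ t in Iic (x * c), exp (-t ^ 2 / 2)
      = v * √v * (π / 2 + arctan (c * √v)) + v ^ 2 * c / (1 + v * c ^ 2) := by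
  have hsplit : ∀ x : ℝ, x ^ 2 * exp (-x ^ 2 / (2 * v)) * ∫ t in Iic (x * c), exp (-t ^ 2 / 2)
      = √(2 * π) / 2 * (x ^ 2 * exp (-x ^ 2 / (2 * v)))
        + x ^ 3 * exp (-x ^ 2 / (2 * v)) * ∫ s in (0 : ℝ)..c, exp (-(x * s) ^ 2 / 2) := by
    intro x
    rw [integral_Iic_mul_exp_neg_sq_div_two]
    ring
  simp_rw [hsplit]
  rw [integral_add ((integrableOn_Ioi_pow_mul_exp_neg_sq_div hv 2).const_mul _)
      (integrableOn_Ioi_pow_three_mul_exp_mul_intervalIntegral hv hc),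
    integral_const_mul, integral_Ioi_pow_three_mul_exp_mul_intervalIntegral hv hc]
  have hmoment : ∫ x in Ioi 0, x ^ 2 * exp (-x ^ 2 / (2 * v))
      = √π / (4 * (2 * v)⁻¹ * √(2 * v)⁻¹) := by
    rw [← integral_Ioi_sq_mul_exp_neg_mul_sq (by positivity)]
    congr 1 with x
    ring_nf
  rw [hmoment, sqrt_inv, sqrt_mul zero_le_two, sqrt_mul zero_le_two]
  field_simp
  rw [sq_sqrt zero_le_two, sq_sqrt pi_nonneg]
  ring

/-- for `b ∈ (0,1)`,
`∫_0^∞ x² e^{−x²/(2b)} Φ(x/√(b⁻¹−b)) dx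
  = (b^{3/2}/√(2π)) [π − arctan(√(1−b²)/b) + b√(1−b²)]`,
where `Φ` is the standard normal CDF (here `b^{3/2} = b·√b`). -/
theorem stmt7 (b : ℝ) (hb : b ∈ Set.Ioo (0 : ℝ) 1) :
    (∫ x in Set.Ioi (0 : ℝ), x ^ 2 * Real.exp (-x ^ 2 / (2 * b)) *
        ((Real.sqrt (2 * π))⁻¹ *
          ∫ t in Set.Iic (x / Real.sqrt (b⁻¹ - b)), Real.exp (-t ^ 2 / 2)))
      = (b * Real.sqrt b) / Real.sqrt (2 * π) *
        (π - Real.arctan (Real.sqrt (1 - b ^ 2) / b) + b * Real.sqrt (1 - b ^ 2)) := by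
  obtain ⟨hb0, hb1⟩ := hb
  have hb2 : 0 < 1 - b ^ 2 := by nlinarith
  have hσ : (√(b⁻¹ - b))⁻¹ = √b / √(1 - b ^ 2) := by
    rw [show b⁻¹ - b = (1 - b ^ 2) / b by field_simp, sqrt_div hb2.le, inv_div]
  have harctan : arctan (√b / √(1 - b ^ 2) * √b) = π / 2 - arctan (√(1 - b ^ 2) / b) := by
    rw [div_mul_eq_mul_div, mul_self_sqrt hb0.le, ← arctan_inv_of_pos (by positivity), inv_div]
  simp_rw [mul_left_comm _ (√(2 * π))⁻¹, div_eq_mul_inv _ √(b⁻¹ - b)]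
  rw [integral_const_mul, integral_Ioi_sq_mul_exp_neg_sq_div_mul_integral_Iic hb0 (by positivity),
    hσ, harctan]
  field_simp
  linear_combination
    (-2 * b * √(1 - b ^ 2)) * sq_sqrt hb2.le - 2 * b ^ 2 * √(1 - b ^ 2) * sq_sqrt hb0.le
end

section
/- Let C ∈ R^{n×n} be the matrix with entries C_{ik} = C_{ki} = i(n+1−k)/(n+1) for i ≤ k, let K ⊆ {1,…,n} be nonempty with elements K(1) < ⋯ < K(|K|), and set K(0) = 0, K(|K|+1) = n+1. Then C_{K,K} is invertible, and the matrix X̃ = C_{:,K} C_{K,K}^{−1} ∈ R^{n×|K|} satisfies, for every i ∈ {1,…,n} and k ∈ {1,…,|K|}: X̃_{i,k} = 0 if i ≤ K(k−1) or i > K(k+1); X̃_{i,k} = (i − K(k−1))/(K(k) − K(k−1)) if K(k−1) ≤ i ≤ K(k); and X̃_{i,k} = (K(k+1) − i)/(K(k+1) − K(k)) if K(k) < i ≤ K(k+1). In particular, rows of X̃ are linear-spline interpolations (hat functions) with knots at the elements of K. -/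
/-!
With `T = n + 1`, the entries of `C` are the values `G(i, k)` of the Green's function
`G(x, y) = min x y * (T - max x y) / T` of `-d²/dx²` on `[0, T]` with Dirichlet boundary
conditions. For fixed `s`, `G(·, s)` vanishes at `0` and `T`, is affine away from `s` and its
slope drops by exactly `1` at `s`. Two consequences, with knots `0 = K(0) < ⋯ < K(|K|+1) = T`:

* if `s` is a knot, `G(·, s)` coincides with its piecewise-linear interpolation at the knots,
  i.e. `∑ₖ hatₖ(x) G(K(k), s) = G(x, s)`; in matrix form, `H C_{K,K} = C_{:,K}` for the matrix
  `H` of hat functions;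
* for `u = C_{K,K} v`, extended by `0` at `K(0)` and `K(|K|+1)`, the slope drop of `u` at the
  knot `K(k)` is `v_k`; hence `C_{K,K}` is injective.

So `C_{K,K}` is invertible and `X̃ = C_{:,K} C_{K,K}⁻¹ = H`.
-/

open Finset

noncomputable section

def dirichletGreen (T x y : ℝ) : ℝ := min x y * (T - max x y) / T

section dirichletGreen

variable {T x y : ℝ}

lemma dirichletGreen_of_le (h : x ≤ y) : dirichletGreen T x y = x * (T - y) / T := by
  rw [dirichletGreen, min_eq_left h, max_eq_right h]

lemma dirichletGreen_of_ge (h : y ≤ x) : dirichletGreen T x y = y * (T - x) / T := by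
  rw [dirichletGreen, min_eq_right h, max_eq_left h]

lemma dirichletGreen_zero_left (hy : 0 ≤ y) : dirichletGreen T 0 y = 0 := by
  rw [dirichletGreen_of_le hy, zero_mul, zero_div]

lemma dirichletGreen_self_left (hy : y ≤ T) : dirichletGreen T T y = 0 := by
  rw [dirichletGreen_of_ge hy, sub_self, mul_zero, zero_div]

lemma dirichletGreen_affine_left {a b s : ℝ} (hax : a ≤ x) (hxb : x ≤ b) (hs : s ≤ a ∨ b ≤ s) :
    (b - a) * dirichletGreen T x s =
      (b - x) * dirichletGreen T a s + (x - a) * dirichletGreen T b s := by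
  rcases hs with hs | hs
  · rw [dirichletGreen_of_ge (hs.trans hax), dirichletGreen_of_ge hs,
      dirichletGreen_of_ge (hs.trans (hax.trans hxb))]
    ring
  · rw [dirichletGreen_of_le (hxb.trans hs), dirichletGreen_of_le ((hax.trans hxb).trans hs),
      dirichletGreen_of_le hs]
    ring

lemma dirichletGreen_slope_sub_slope_of_le_or_le {u v w s : ℝ} (huv : u < v) (hvw : v < w)
    (hs : s ≤ u ∨ w ≤ s) :
    (dirichletGreen T v s - dirichletGreen T u s) / (v - u) -
      (dirichletGreen T w s - dirichletGreen T v s) / (w - v) = 0 := by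
  have h := dirichletGreen_affine_left (T := T) huv.le hvw.le hs
  rw [sub_eq_zero, div_eq_div_iff (sub_ne_zero.2 huv.ne') (sub_ne_zero.2 hvw.ne')]
  linear_combination h

lemma dirichletGreen_slope_sub_slope_self (hT : T ≠ 0) {u v w : ℝ} (huv : u < v) (hvw : v < w) :
    (dirichletGreen T v v - dirichletGreen T u v) / (v - u) -
      (dirichletGreen T w v - dirichletGreen T v v) / (w - v) = 1 := by
  rw [dirichletGreen_of_le le_rfl, dirichletGreen_of_le huv.le, dirichletGreen_of_ge hvw.le]
  field_simp [sub_ne_zero.2 huv.ne', sub_ne_zero.2 hvw.ne']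
  ring

lemma apply_eq_dirichletGreen {n : ℕ} {C : Matrix (Fin n) (Fin n) ℝ}
    (hC : ∀ i k : Fin n, (i : ℕ) ≤ (k : ℕ) →
      C i k = ((i : ℝ) + 1) * ((n : ℝ) + 1 - ((k : ℝ) + 1)) / ((n : ℝ) + 1) ∧ C k i = C i k)
    (a b : Fin n) : C a b = dirichletGreen (n + 1) ((a : ℕ) + 1) ((b : ℕ) + 1) := by
  rcases le_total (a : ℕ) b with h | h
  · rw [(hC a b h).1, dirichletGreen_of_le (by exact_mod_cast Nat.succ_le_succ h)]
  · rw [(hC b a h).2, (hC b a h).1, dirichletGreen_of_ge (by exact_mod_cast Nat.succ_le_succ h)]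

end dirichletGreen

/-- The hat function with knots `t k < t (k + 1) < t (k + 2)`, peaking at `t (k + 1)`. -/
def hat (t : ℕ → ℝ) (k : ℕ) (x : ℝ) : ℝ :=
  if t k ≤ x ∧ x ≤ t (k + 1) then (x - t k) / (t (k + 1) - t k)
  else if t (k + 1) < x ∧ x ≤ t (k + 2) then (t (k + 2) - x) / (t (k + 2) - t (k + 1))
  else 0

section hat

variable {t : ℕ → ℝ} {k : ℕ} {x : ℝ}

lemma hat_of_le_of_le (h₁ : t k ≤ x) (h₂ : x ≤ t (k + 1)) :
    hat t k x = (x - t k) / (t (k + 1) - t k) :=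
  if_pos ⟨h₁, h₂⟩

lemma hat_of_lt_of_le (h₁ : t (k + 1) < x) (h₂ : x ≤ t (k + 2)) :
    hat t k x = (t (k + 2) - x) / (t (k + 2) - t (k + 1)) := by
  rw [hat, if_neg fun h => h₁.not_ge h.2, if_pos ⟨h₁, h₂⟩]

lemma hat_eq_zero (h₀₁ : t k ≤ t (k + 1)) (h₁₂ : t (k + 1) ≤ t (k + 2))
    (h : x ≤ t k ∨ t (k + 2) < x) : hat t k x = 0 := by
  unfold hat
  split_ifs with hl hr
  · rw [show x = t k by grind, sub_self, zero_div]
  · grind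
  · rfl

end hat

lemma exists_mem_Ioc_knots {t : ℕ → ℝ} {p : ℕ} {x : ℝ} (hx : x ∈ Set.Ioc (t 0) (t (p + 1))) :
    ∃ m ≤ p, x ∈ Set.Ioc (t m) (t (m + 1)) := by
  classical
  have hP : ∃ m, x ≤ t (m + 1) := ⟨p, hx.2⟩
  refine ⟨Nat.find hP, Nat.find_min' hP hx.2, ?_, Nat.find_spec hP⟩
  rcases hm : Nat.find hP with _ | m
  · exact hx.1
  · exact not_le.1 (Nat.find_min hP (hm ▸ m.lt_succ_self))

theorem sum_hat_mul_eq {t : ℕ → ℝ} {p : ℕ} (ht : MonotoneOn t (Set.Iic (p + 1))) {f : ℝ → ℝ}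
    (hf₀ : f (t 0) = 0) (hf₁ : f (t (p + 1)) = 0)
    (hf : ∀ m ≤ p, ∀ x ∈ Set.Icc (t m) (t (m + 1)),
      (t (m + 1) - t m) * f x = (t (m + 1) - x) * f (t m) + (x - t m) * f (t (m + 1)))
    {x : ℝ} (hx : x ∈ Set.Ioc (t 0) (t (p + 1))) :
    ∑ k ∈ range p, hat t k x * f (t (k + 1)) = f x := by
  obtain ⟨m, hmp, hxm⟩ := exists_mem_Ioc_knots hx
  have hle : ∀ i j, i ≤ j → j ≤ p + 1 → t i ≤ t j := fun i j hij hj =>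
    ht (Set.mem_Iic.2 (hij.trans hj)) (Set.mem_Iic.2 hj) hij
  set A := (t (m + 1) - x) / (t (m + 1) - t m) * f (t m)
  set B := (x - t m) / (t (m + 1) - t m) * f (t (m + 1))
  have hterm : ∀ k ∈ range p,
      hat t k x * f (t (k + 1)) = (if k + 1 = m then A else 0) + (if k = m then B else 0) := by
    intro k hk
    have hkp := mem_range.1 hk
    rcases lt_trichotomy (k + 1) m with hkm | rfl | hkm
    · rw [hat_eq_zero (hle _ _ (by omega) (by omega)) (hle _ _ (by omega) (by omega))
        (Or.inr ((hle _ _ hkm (by omega)).trans_lt hxm.1))]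
      simp [hkm.ne, show k ≠ m by omega]
    · rw [hat_of_lt_of_le hxm.1 hxm.2]
      simp [A]
    · rcases (Nat.lt_succ_iff.1 hkm).eq_or_lt with rfl | hmk
      · rw [hat_of_le_of_le hxm.1.le hxm.2]
        simp [B]
      · rw [hat_eq_zero (hle _ _ (by omega) (by omega)) (hle _ _ (by omega) (by omega))
          (Or.inl (hxm.2.trans (hle _ _ hmk (by omega))))]
        simp [hkm.ne', hmk.ne']
  have hA : ∑ k ∈ range p, (if k + 1 = m then A else 0) = A := by
    rcases m with _ | m
    · simp [A, hf₀]
    · simp [show m < p by omega]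
  have hB : ∑ k ∈ range p, (if k = m then B else 0) = B := by
    rcases hmp.lt_or_eq with hmp | rfl
    · simp [hmp]
    · simp [B, hf₁]
  have hΔ : t (m + 1) - t m ≠ 0 := sub_ne_zero.2 (hxm.1.trans_le hxm.2).ne'
  rw [sum_congr rfl hterm, sum_add_distrib, hA, hB, eq_comm, ← mul_right_inj' hΔ,
    hf m hmp x ⟨hxm.1.le, hxm.2⟩]
  simp only [A, B]
  field_simp

def slopeDrop (t u : ℕ → ℝ) (c : ℕ) : ℝ :=
  (u (c + 1) - u c) / (t (c + 1) - t c) - (u (c + 2) - u (c + 1)) / (t (c + 2) - t (c + 1))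

lemma slopeDrop_sum_mul {ι : Type*} (t : ℕ → ℝ) (s : Finset ι) (a : ι → ℝ) (g : ι → ℕ → ℝ)
    (c : ℕ) :
    slopeDrop t (fun j => ∑ b ∈ s, a b * g b j) c = ∑ b ∈ s, a b * slopeDrop t (g b) c := by
  simp only [slopeDrop, ← sum_sub_distrib, sum_div]
  exact sum_congr rfl fun b _ => by ring

def knotGreenMatrix (T : ℝ) (t : ℕ → ℝ) (p : ℕ) : Matrix (Fin p) (Fin p) ℝ :=
  Matrix.of fun a b => dirichletGreen T (t (a + 1)) (t (b + 1))

section knotGreenMatrix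

variable {T : ℝ} {t : ℕ → ℝ} {p : ℕ}

lemma knot_mem_Icc (ht : MonotoneOn t (Set.Iic (p + 1))) (h₀ : t 0 = 0) (h₁ : t (p + 1) = T)
    {j : ℕ} (hj : j ≤ p + 1) : t j ∈ Set.Icc 0 T :=
  ⟨h₀ ▸ ht (by simp) (Set.mem_Iic.2 hj) (Nat.zero_le j),
    h₁ ▸ ht (Set.mem_Iic.2 hj) (by simp) hj⟩

lemma slopeDrop_dirichletGreen_knot (ht : StrictMonoOn t (Set.Iic (p + 1))) (h₀ : t 0 = 0)
    (h₁ : t (p + 1) = T) {b c : ℕ} (hb : b < p) (hc : c < p) :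
    slopeDrop t (fun j => dirichletGreen T (t j) (t (b + 1))) c = if b = c then 1 else 0 := by
  have hlt : ∀ i j, i < j → j ≤ p + 1 → t i < t j := fun i j hij hj =>
    ht (Set.mem_Iic.2 (hij.le.trans hj)) (Set.mem_Iic.2 hj) hij
  have huv := hlt c (c + 1) (by omega) (by omega)
  have hvw := hlt (c + 1) (c + 2) (by omega) (by omega)
  split_ifs with hbc
  · subst hbc
    have hT : T ≠ 0 := h₁ ▸ h₀ ▸ (hlt 0 (p + 1) (by omega) le_rfl).ne'
    exact dirichletGreen_slope_sub_slope_self hT huv hvw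
  · refine dirichletGreen_slope_sub_slope_of_le_or_le huv hvw ?_
    have hle : ∀ i j, i ≤ j → j ≤ p + 1 → t i ≤ t j := fun i j hij hj =>
      ht.monotoneOn (Set.mem_Iic.2 (hij.trans hj)) (Set.mem_Iic.2 hj) hij
    rcases Nat.lt_or_gt_of_ne hbc with h | h
    · exact Or.inl (hle _ _ (by omega) (by omega))
    · exact Or.inr (hle _ _ (by omega) (by omega))

theorem det_knotGreenMatrix_ne_zero (ht : StrictMonoOn t (Set.Iic (p + 1))) (h₀ : t 0 = 0)
    (h₁ : t (p + 1) = T) : (knotGreenMatrix T t p).det ≠ 0 := by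
  intro hdet
  obtain ⟨v, hv, hMv⟩ := Matrix.exists_mulVec_eq_zero_iff.2 hdet
  refine hv (funext fun c => ?_)
  set u : ℕ → ℝ := fun j => ∑ b : Fin p, v b * dirichletGreen T (t j) (t (b + 1))
  have hu : ∀ j ≤ p + 1, u j = 0 := by
    intro j hj
    rcases j with _ | j
    · simp only [u, h₀]
      exact sum_eq_zero fun b _ => by
        rw [dirichletGreen_zero_left (knot_mem_Icc ht.monotoneOn h₀ h₁ (by omega)).1, mul_zero]
    rcases (Nat.lt_succ_iff.1 hj).lt_or_eq with hjp | rfl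
    · have := congrFun hMv ⟨j, hjp⟩
      simpa [Matrix.mulVec, dotProduct, knotGreenMatrix, mul_comm, u] using this
    · simp only [u, h₁]
      exact sum_eq_zero fun b _ => by
        rw [dirichletGreen_self_left (knot_mem_Icc ht.monotoneOn h₀ h₁ (by omega)).2, mul_zero]
  calc v c = slopeDrop t u c := by
        rw [slopeDrop_sum_mul, Fintype.sum_congr _ (fun b => v b * if b = c then 1 else 0)
          fun b => by rw [slopeDrop_dirichletGreen_knot ht h₀ h₁ b.2 c.2]; simp only [Fin.val_inj]]
        simp
    _ = 0 := by simp [slopeDrop, hu c (by omega), hu (c + 1) (by omega), hu (c + 2) (by omega)]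

theorem hatMatrix_mul_knotGreenMatrix {ι : Type*} (ht : MonotoneOn t (Set.Iic (p + 1)))
    (h₀ : t 0 = 0) (h₁ : t (p + 1) = T) (x : ι → ℝ) (hx : ∀ i, x i ∈ Set.Ioc 0 T) :
    Matrix.of (fun i (k : Fin p) => hat t k (x i)) * knotGreenMatrix T t p =
      Matrix.of fun i (b : Fin p) => dirichletGreen T (x i) (t (b + 1)) := by
  ext i b
  simp only [Matrix.mul_apply, Matrix.of_apply, knotGreenMatrix]
  rw [Fin.sum_univ_eq_sum_range (fun k => hat t k (x i) * dirichletGreen T (t (k + 1)) _)]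
  refine sum_hat_mul_eq ht (f := fun y => dirichletGreen T y (t (b + 1))) ?_ ?_ ?_
    (h₀ ▸ h₁ ▸ hx i)
  · rw [h₀]
    exact dirichletGreen_zero_left (knot_mem_Icc ht h₀ h₁ (by omega)).1
  · rw [h₁]
    exact dirichletGreen_self_left (knot_mem_Icc ht h₀ h₁ (by omega)).2
  · intro m hm y hy
    refine dirichletGreen_affine_left hy.1 hy.2 ?_
    rcases le_or_gt (b + 1 : ℕ) m with h | h
    · exact Or.inl (ht (Set.mem_Iic.2 (by omega)) (Set.mem_Iic.2 (by omega)) h)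
    · exact Or.inr (ht (Set.mem_Iic.2 (by omega)) (Set.mem_Iic.2 (by omega)) h)

end knotGreenMatrix

end

theorem stmt8_general (n p : ℕ)
    (C : Matrix (Fin n) (Fin n) ℝ)
    (hC : ∀ i k : Fin n, (i : ℕ) ≤ (k : ℕ) →
      C i k = ((i : ℝ) + 1) * ((n : ℝ) + 1 - ((k : ℝ) + 1)) / ((n : ℝ) + 1) ∧ C k i = C i k)
    (κ : ℕ → ℕ) (hκ0 : κ 0 = 0) (hκlast : κ (p + 1) = n + 1)
    (hκmono : ∀ j, j ≤ p → κ j < κ (j + 1))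
    (e : Fin p → Fin n) (he : ∀ j : Fin p, (e j : ℕ) + 1 = κ ((j : ℕ) + 1))
    (CKK : Matrix (Fin p) (Fin p) ℝ)
    (hCKK : CKK = Matrix.of fun a b : Fin p => C (e a) (e b))
    (X : Matrix (Fin n) (Fin p) ℝ)
    (hX : X = (Matrix.of fun (i : Fin n) (b : Fin p) => C i (e b)) * CKK⁻¹) :
    CKK.det ≠ 0 ∧
    ∀ (i : Fin n) (k : Fin p),
      (((i : ℕ) + 1 ≤ κ (k : ℕ) ∨ κ ((k : ℕ) + 2) < (i : ℕ) + 1) → X i k = 0) ∧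
      (κ (k : ℕ) ≤ (i : ℕ) + 1 → (i : ℕ) + 1 ≤ κ ((k : ℕ) + 1) →
        X i k = (((i : ℕ) : ℝ) + 1 - (κ (k : ℕ) : ℝ))
          / ((κ ((k : ℕ) + 1) : ℝ) - (κ (k : ℕ) : ℝ))) ∧
      (κ ((k : ℕ) + 1) < (i : ℕ) + 1 → (i : ℕ) + 1 ≤ κ ((k : ℕ) + 2) →
        X i k = ((κ ((k : ℕ) + 2) : ℝ) - (((i : ℕ) : ℝ) + 1))
          / ((κ ((k : ℕ) + 2) : ℝ) - (κ ((k : ℕ) + 1) : ℝ))) := by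
  set t : ℕ → ℝ := fun j => κ j
  have ht : StrictMonoOn t (Set.Iic (p + 1)) := strictMonoOn_Iic_of_lt_succ fun m hm => by
    simpa [t] using hκmono m (Order.lt_succ_iff.1 hm)
  have h₀ : t 0 = 0 := by simp [t, hκ0]
  have h₁ : t (p + 1) = n + 1 := by simp [t, hκlast]
  have hCG := apply_eq_dirichletGreen hC
  have he' : ∀ j : Fin p, ((e j : ℕ) : ℝ) + 1 = t (j + 1) := fun j => by
    simp only [t]; exact_mod_cast he j
  have hCKK' : CKK = knotGreenMatrix (n + 1) t p := by
    ext a b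
    simp only [hCKK, knotGreenMatrix, Matrix.of_apply, hCG, he']
  have hdet := hCKK' ▸ det_knotGreenMatrix_ne_zero ht h₀ h₁
  have hHat : Matrix.of (fun (i : Fin n) (k : Fin p) => hat t k (((i : ℕ) : ℝ) + 1)) * CKK =
      Matrix.of fun i b => C i (e b) := by
    rw [hCKK', hatMatrix_mul_knotGreenMatrix ht.monotoneOn h₀ h₁ _
      fun i => ⟨by positivity, by simp⟩]
    ext i b
    simp only [Matrix.of_apply, hCG, he']
  have hXhat : X = Matrix.of fun (i : Fin n) (k : Fin p) => hat t k (((i : ℕ) : ℝ) + 1) := by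
    rw [hX, ← hHat, Matrix.mul_nonsing_inv_cancel_right _ _ (isUnit_iff_ne_zero.2 hdet)]
  refine ⟨hdet, fun i k => ⟨fun h => ?_, fun hl hr => ?_, fun hl hr => ?_⟩⟩ <;>
    simp only [hXhat, Matrix.of_apply, t]
  · exact hat_eq_zero (by exact_mod_cast (hκmono k (by omega)).le)
      (by exact_mod_cast (hκmono (k + 1) (by omega)).le) (by exact_mod_cast h)
  · exact hat_of_le_of_le (by exact_mod_cast hl) (by exact_mod_cast hr)
  · exact hat_of_lt_of_le (by exact_mod_cast hl) (by exact_mod_cast hr)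

/-- interpolation property of the FLSA normal matrix.
`C ∈ ℝ^{n×n}` has entries `C_{ik} = C_{ki} = i(n+1−k)/(n+1)` for `i ≤ k` (1-indexed).
The set `K = {κ 1 < ⋯ < κ p} ⊆ {1,…,n}` is encoded by a strictly increasing `κ` with
`κ 0 = 0`, `κ (p+1) = n+1`, and `e : Fin p → Fin n` are the corresponding indices.
Then `C_{K,K}` is invertible and `X̃ = C_{:,K} C_{K,K}⁻¹` consists of hat functions
with knots at the elements of `K`. -/
theorem stmt8 (n p : ℕ) (hp : 1 ≤ p) (hpn : p ≤ n)
    (C : Matrix (Fin n) (Fin n) ℝ)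
    (hC : ∀ i k : Fin n, (i : ℕ) ≤ (k : ℕ) →
      C i k = ((i : ℝ) + 1) * ((n : ℝ) + 1 - ((k : ℝ) + 1)) / ((n : ℝ) + 1) ∧ C k i = C i k)
    (κ : ℕ → ℕ) (hκ0 : κ 0 = 0) (hκlast : κ (p + 1) = n + 1)
    (hκmono : ∀ j, j ≤ p → κ j < κ (j + 1))
    (e : Fin p → Fin n) (he : ∀ j : Fin p, (e j : ℕ) + 1 = κ ((j : ℕ) + 1))
    (CKK : Matrix (Fin p) (Fin p) ℝ)
    (hCKK : CKK = Matrix.of fun a b : Fin p => C (e a) (e b))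
    (X : Matrix (Fin n) (Fin p) ℝ)
    (hX : X = (Matrix.of fun (i : Fin n) (b : Fin p) => C i (e b)) * CKK⁻¹) :
    CKK.det ≠ 0 ∧
    ∀ (i : Fin n) (k : Fin p),
      (((i : ℕ) + 1 ≤ κ (k : ℕ) ∨ κ ((k : ℕ) + 2) < (i : ℕ) + 1) → X i k = 0) ∧
      (κ (k : ℕ) ≤ (i : ℕ) + 1 → (i : ℕ) + 1 ≤ κ ((k : ℕ) + 1) →
        X i k = (((i : ℕ) : ℝ) + 1 - (κ (k : ℕ) : ℝ))
          / ((κ ((k : ℕ) + 1) : ℝ) - (κ (k : ℕ) : ℝ))) ∧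
      (κ ((k : ℕ) + 1) < (i : ℕ) + 1 → (i : ℕ) + 1 ≤ κ ((k : ℕ) + 2) →
        X i k = ((κ ((k : ℕ) + 2) : ℝ) - (((i : ℕ) : ℝ) + 1))
          / ((κ ((k : ℕ) + 2) : ℝ) - (κ ((k : ℕ) + 1) : ℝ))) :=
  stmt8_general n p C hC κ hκ0 hκlast hκmono e he CKK hCKK X hX
end

section
/- Let C ∈ R^{n×n} with C_{ik} = i(n+1−k)/(n+1) for i ≤ k and C symmetric, let K ⊆ {1,…,n}, and suppose i lies strictly between two consecutive elements K(k̃) and K(k̃+1) of K (with the conventions K(0)=0, K(|K|+1)=n+1). Then the column vector C_{K,i} depends affinely on i in this range: C_{K(j),i} = C_{K(j),K(k̃)} + (K(j)/(n+1))(K(k̃) − i) for K(j) ≤ K(k̃), and C_{K(j),i} = C_{K(j),K(k̃)} + ((n+1−K(j))/(n+1))(i − K(k̃)) for K(j) > K(k̃). -/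
/-! Within one row `r`, the entry `C r k = min(r,k) (n+1 - max(r,k)) / (n+1)` is affine in `k` on
each side of the diagonal, with slope `-r/(n+1)` for `k ≥ r` and `(n+1-r)/(n+1)` for `k ≤ r`.
A column `i` strictly between consecutive elements of `K` never crosses a row `r ∈ K`, so comparing
it with column `K(k̃)` only ever uses one of the two affine pieces. -/

section NormalMatrix

variable {n : ℕ} {C : ℕ → ℕ → ℝ}
  (hC : ∀ i k : ℕ, i ≤ k →
    C i k = (i : ℝ) * ((n : ℝ) + 1 - (k : ℝ)) / ((n : ℝ) + 1) ∧ C k i = C i k)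
include hC

theorem entry_eq_of_le_of_le_right {r a b : ℕ} (hra : r ≤ a) (hab : a ≤ b) :
    C r b = C r a + (r : ℝ) / ((n : ℝ) + 1) * ((a : ℝ) - (b : ℝ)) := by
  rw [(hC r b (hra.trans hab)).1, (hC r a hra).1]
  field_simp
  ring

theorem entry_eq_of_le_of_le_left {r a b : ℕ} (hab : a ≤ b) (hbr : b ≤ r) :
    C r b = C r a + ((n : ℝ) + 1 - (r : ℝ)) / ((n : ℝ) + 1) * ((b : ℝ) - (a : ℝ)) := by
  rw [(hC b r hbr).2, (hC b r hbr).1, (hC a r (hab.trans hbr)).2, (hC a r (hab.trans hbr)).1]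
  field_simp
  ring

end NormalMatrix

/-- `Ka` and `Kb` stand for the consecutive elements `K(k̃) < K(k̃+1)` of `K`. -/
theorem stmt9_general (n : ℕ) (C : ℕ → ℕ → ℝ)
    (hC : ∀ i k : ℕ, i ≤ k →
      C i k = (i : ℝ) * ((n : ℝ) + 1 - (k : ℝ)) / ((n : ℝ) + 1) ∧ C k i = C i k)
    (Ka Kb i : ℕ) (h1 : Ka < i) (h2 : i < Kb) :
    ∀ r, 1 ≤ r → r ≤ n →
      (r ≤ Ka → C r i = C r Ka + (r : ℝ) / ((n : ℝ) + 1) * ((Ka : ℝ) - (i : ℝ))) ∧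
      (Kb ≤ r → C r i = C r Ka + ((n : ℝ) + 1 - (r : ℝ)) / ((n : ℝ) + 1) * ((i : ℝ) - (Ka : ℝ))) :=
  fun _ _ _ =>
    ⟨fun hrKa => entry_eq_of_le_of_le_right hC hrKa h1.le,
     fun hKbr => entry_eq_of_le_of_le_left hC h1.le (h2.le.trans hKbr)⟩

/-- the columns of the FLSA normal matrix depend affinely on the column index
between two consecutive elements `Ka = K(k̃) < i < Kb = K(k̃+1)` of `K`
(entries extended to all natural indices via the formula `C i k = i(n+1−k)/(n+1)`, `i ≤ k`). -/
theorem stmt9 (n : ℕ) (C : ℕ → ℕ → ℝ)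
    (hC : ∀ i k : ℕ, i ≤ k →
      C i k = (i : ℝ) * ((n : ℝ) + 1 - (k : ℝ)) / ((n : ℝ) + 1) ∧ C k i = C i k)
    (Ka Kb i : ℕ) (h1 : Ka < i) (h2 : i < Kb) (h3 : Kb ≤ n + 1) :
    ∀ r, 1 ≤ r → r ≤ n →
      (r ≤ Ka → C r i = C r Ka + (r : ℝ) / ((n : ℝ) + 1) * ((Ka : ℝ) - (i : ℝ))) ∧
      (Kb ≤ r → C r i = C r Ka + ((n : ℝ) + 1 - (r : ℝ)) / ((n : ℝ) + 1) * ((i : ℝ) - (Ka : ℝ))) :=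
  stmt9_general n C hC Ka Kb i h1 h2
end

section
/- Fix λ > 0 and suppose σ² = (σ₁²,…,σ_N²) minimizes (1/2)∑_{t=1}^N (y_t² − σ_t²)² + λ∑_{t=2}^N |σ_t² − σ_{t−1}²| over R^N, where y_t ≠ 0 for all t. Then σ_t² > 0 for all t; equivalently, the fused-lasso estimate applied to the squared data y_t² is strictly positive, and hence also solves the penalized Gaussian variance log-likelihood problem min over η_t < 0 of −(1/2)∑ ln(−η_t) − ∑ η_t y_t² + λ∑_{t=2}^N |η_t − η_{t−1}| via η_t = −1/(2σ_t²). -/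
open Finset Filter Topology

/-!
Clipping a candidate from below at `min_t y_t² > 0` does not increase its total variation and
strictly decreases the squared loss wherever it moves a nonpositive entry, so a minimizer is
positive.

For the likelihood, only the first-order condition of the fused lasso at `v` is used: its
directional derivative is nonnegative in every direction `d`, in particular in `d = η - η₀` with
`η₀ = -1/(2v)`. The smooth part of the negative log-likelihood is convex with gradient
`v_t - y_t²` at `η₀`, and since `v ↦ -1/(2v)` is increasing, the increments of `η₀` have the same
signs as those of `v`; hence the subgradient of the total variation at `v` is also one at `η₀`.
-/

noncomputable def absDirDeriv (w e : ℝ) : ℝ := if w = 0 then |e| else SignType.sign w * e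

lemma abs_add_mul_eventually_eq (w e : ℝ) :
    ∀ᶠ ε in 𝓝[>] 0, |w + ε * e| = |w| + ε * absDirDeriv w e := by
  unfold absDirDeriv
  split_ifs with hw
  · filter_upwards [self_mem_nhdsWithin] with ε hε
    rw [hw, zero_add, abs_mul, abs_of_pos (Set.mem_Ioi.1 hε), abs_zero, zero_add]
  · have hcont : Tendsto (fun ε : ℝ => w + ε * e) (𝓝 0) (𝓝 w) :=
      (by fun_prop : Continuous fun ε : ℝ => w + ε * e).tendsto' 0 w (by simp)
    have hsign : ∀ᶠ ε in 𝓝 (0 : ℝ), SignType.sign (w + ε * e) = SignType.sign w := by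
      have := (continuousAt_sign_of_ne_zero hw).tendsto.comp hcont
      rwa [nhds_discrete SignType, tendsto_pure] at this
    filter_upwards [nhdsWithin_le_nhds hsign] with ε hε
    rw [← sign_mul_self, ← sign_mul_self, hε]
    ring

lemma absDirDeriv_sub_le {w δ : ℝ} (hsign : SignType.sign δ = SignType.sign w) (x : ℝ) :
    absDirDeriv w (x - δ) ≤ |x| - |δ| := by
  unfold absDirDeriv
  split_ifs with hw
  · rw [sign_eq_zero_iff.1 (hsign.trans (sign_eq_zero_iff.2 hw))]
    simp
  · have hle : (SignType.sign δ : ℝ) * x ≤ |x| := by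
      rcases lt_trichotomy δ 0 with hδ | hδ | hδ
      · simpa [sign_neg hδ] using neg_le_abs x
      · simp [hδ]
      · simpa [sign_pos hδ] using le_abs_self x
    rw [← hsign, mul_sub, sign_mul_self]
    linarith

lemma sign_neg_inv_two_mul_sub {a b : ℝ} (ha : 0 < a) (hb : 0 < b) :
    SignType.sign (-(1 / (2 * b)) - -(1 / (2 * a))) = SignType.sign (b - a) := by
  have h : -(1 / (2 * b)) - -(1 / (2 * a)) = (b - a) * (2 * a * b)⁻¹ := by
    field_simp
    ring
  rw [h, sign_mul, sign_pos (by positivity : 0 < (2 * a * b)⁻¹), mul_one]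

def totalVariation (J : Finset ℕ) (g : ℕ → ℝ) : ℝ := ∑ t ∈ J, |g t - g (t - 1)|

noncomputable def totalVariationDirDeriv (J : Finset ℕ) (g d : ℕ → ℝ) : ℝ :=
  ∑ t ∈ J, absDirDeriv (g t - g (t - 1)) (d t - d (t - 1))

noncomputable def fusedLassoObjective (I J : Finset ℕ) (lam : ℝ) (a g : ℕ → ℝ) : ℝ :=
  (1 / 2) * ∑ t ∈ I, (a t - g t) ^ 2 + lam * totalVariation J g

noncomputable def varianceNegLogLik (I J : Finset ℕ) (lam : ℝ) (a η : ℕ → ℝ) : ℝ :=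
  -(1 / 2) * ∑ t ∈ I, Real.log (-η t) - ∑ t ∈ I, η t * a t + lam * totalVariation J η

lemma totalVariation_add_mul_eventually_eq (J : Finset ℕ) (g d : ℕ → ℝ) :
    ∀ᶠ ε in 𝓝[>] 0, totalVariation J (fun t => g t + ε * d t)
      = totalVariation J g + ε * totalVariationDirDeriv J g d := by
  filter_upwards [(eventually_all_finset J).2 fun t _ =>
    abs_add_mul_eventually_eq (g t - g (t - 1)) (d t - d (t - 1))] with ε hε
  simp only [totalVariation, totalVariationDirDeriv, mul_sum, ← sum_add_distrib]
  refine sum_congr rfl fun t ht => ?_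
  rw [← hε t ht]
  ring_nf

lemma fusedLassoObjective_add_mul_eventually_eq (I J : Finset ℕ) (lam : ℝ) (a g d : ℕ → ℝ) :
    ∀ᶠ ε in 𝓝[>] 0, fusedLassoObjective I J lam a (fun t => g t + ε * d t)
      = fusedLassoObjective I J lam a g
        + ε * (∑ t ∈ I, (g t - a t) * d t + lam * totalVariationDirDeriv J g d)
        + ε ^ 2 * ((1 / 2) * ∑ t ∈ I, d t ^ 2) := by
  filter_upwards [totalVariation_add_mul_eventually_eq J g d] with ε hε
  have hsq : ∑ t ∈ I, (a t - (g t + ε * d t)) ^ 2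
      = ∑ t ∈ I, (a t - g t) ^ 2 + 2 * ε * ∑ t ∈ I, (g t - a t) * d t
        + ε ^ 2 * ∑ t ∈ I, d t ^ 2 := by
    simp only [mul_sum, ← sum_add_distrib]
    exact sum_congr rfl fun t _ => by ring
  rw [fusedLassoObjective, fusedLassoObjective, hε, hsq]
  ring

lemma dirDeriv_nonneg_of_forall_fusedLassoObjective_le {I J : Finset ℕ} {lam : ℝ}
    {a v : ℕ → ℝ} (hmin : ∀ g, fusedLassoObjective I J lam a v ≤ fusedLassoObjective I J lam a g)
    (d : ℕ → ℝ) :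
    0 ≤ ∑ t ∈ I, (v t - a t) * d t + lam * totalVariationDirDeriv J v d := by
  set L := ∑ t ∈ I, (v t - a t) * d t + lam * totalVariationDirDeriv J v d
  set Q := (1 / 2) * ∑ t ∈ I, d t ^ 2
  have hlim : Tendsto (fun ε => L + ε * Q) (𝓝[>] 0) (𝓝 L) := by
    have : Tendsto (fun ε : ℝ => L + ε * Q) (𝓝 0) (𝓝 L) :=
      (by fun_prop : Continuous fun ε : ℝ => L + ε * Q).tendsto' 0 L (by simp)
    exact this.mono_left nhdsWithin_le_nhds
  refine ge_of_tendsto hlim ?_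
  filter_upwards [fusedLassoObjective_add_mul_eventually_eq I J lam a v d,
    self_mem_nhdsWithin] with ε hε hpos
  have h : fusedLassoObjective I J lam a v ≤ fusedLassoObjective I J lam a v + ε * L + ε ^ 2 * Q :=
    (hmin _).trans_eq hε
  have hε0 : (0 : ℝ) < ε := hpos
  nlinarith

lemma pos_of_forall_fusedLassoObjective_le {I J : Finset ℕ} {lam : ℝ} {a v : ℕ → ℝ}
    (hlam : 0 ≤ lam) (ha : ∀ t ∈ I, 0 < a t)
    (hmin : ∀ g, fusedLassoObjective I J lam a v ≤ fusedLassoObjective I J lam a g) :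
    ∀ t ∈ I, 0 < v t := by
  by_contra! ⟨s, hs, hvs⟩
  set m := I.inf' ⟨s, hs⟩ a
  have hm0 : 0 < m := (lt_inf'_iff _).2 ha
  have hma : ∀ t ∈ I, m ≤ a t := fun t ht => inf'_le _ ht
  have hsq : ∑ t ∈ I, (a t - max (v t) m) ^ 2 < ∑ t ∈ I, (a t - v t) ^ 2 := by
    refine sum_lt_sum (fun t ht => ?_) ⟨s, hs, ?_⟩
    · rcases le_or_gt m (v t) with h | h
      · rw [max_eq_left h]
      · rw [max_eq_right h.le]
        nlinarith [hma t ht]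
    · rw [max_eq_right (by linarith)]
      nlinarith [hma s hs]
  have htv : totalVariation J (fun t => max (v t) m) ≤ totalVariation J v :=
    sum_le_sum fun t _ => abs_max_sub_max_le_abs _ _ _
  have h := hmin fun t => max (v t) m
  rw [fusedLassoObjective, fusedLassoObjective] at h
  linarith [mul_le_mul_of_nonneg_left htv hlam]

lemma gaussianNegLogLik_tangent_le {V E : ℝ} (hV : 0 < V) (hE : E < 0) (A : ℝ) :
    -(1 / 2) * Real.log (-(-(1 / (2 * V)))) - -(1 / (2 * V)) * A
        + (V - A) * (E - -(1 / (2 * V)))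
      ≤ -(1 / 2) * Real.log (-E) - E * A := by
  have hlog : Real.log (-E * (2 * V)) ≤ -E * (2 * V) - 1 :=
    Real.log_le_sub_one_of_pos (by nlinarith)
  rw [Real.log_mul (by linarith) (by positivity)] at hlog
  rw [neg_neg, one_div (2 * V), Real.log_inv]
  have h : (V - A) * (E - -(2 * V)⁻¹) = V * E + 1 / 2 - A * E - A * (2 * V)⁻¹ := by
    field_simp
    ring
  rw [h]
  nlinarith

lemma varianceNegLogLik_le_of_dirDeriv_nonneg {I J : Finset ℕ} {lam : ℝ} {a v η : ℕ → ℝ}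
    (hlam : 0 ≤ lam) (hJ : ∀ t ∈ J, t ∈ I ∧ t - 1 ∈ I) (hv : ∀ t ∈ I, 0 < v t)
    (hη : ∀ t ∈ I, η t < 0)
    (hfo : ∀ d, 0 ≤ ∑ t ∈ I, (v t - a t) * d t + lam * totalVariationDirDeriv J v d) :
    varianceNegLogLik I J lam a (fun t => -(1 / (2 * v t))) ≤ varianceNegLogLik I J lam a η := by
  set η₀ : ℕ → ℝ := fun t => -(1 / (2 * v t))
  set d : ℕ → ℝ := fun t => η t - η₀ t
  have hsmooth : ∑ t ∈ I, (-(1 / 2) * Real.log (-η₀ t) - η₀ t * a t) + ∑ t ∈ I, (v t - a t) * d t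
      ≤ ∑ t ∈ I, (-(1 / 2) * Real.log (-η t) - η t * a t) := by
    rw [← sum_add_distrib]
    exact sum_le_sum fun t ht => gaussianNegLogLik_tangent_le (hv t ht) (hη t ht) (a t)
  have htv : totalVariationDirDeriv J v d ≤ totalVariation J η - totalVariation J η₀ := by
    rw [totalVariation, totalVariation, ← sum_sub_distrib]
    refine sum_le_sum fun t ht => ?_
    have hsign := sign_neg_inv_two_mul_sub (hv _ (hJ t ht).2) (hv _ (hJ t ht).1)
    have hd : d t - d (t - 1) = η t - η (t - 1) - (η₀ t - η₀ (t - 1)) := by ring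
    rw [hd]
    exact absDirDeriv_sub_le hsign _
  simp only [varianceNegLogLik, sum_sub_distrib, ← mul_sum] at hsmooth ⊢
  linarith [hfo d, mul_le_mul_of_nonneg_left htv hlam]

theorem stmt17_general (N : ℕ) (y : ℕ → ℝ) (hy : ∀ t ∈ Icc 1 N, y t ≠ 0)
    (lam : ℝ) (hlam : 0 < lam) (v : ℕ → ℝ)
    (hmin : ∀ g : ℕ → ℝ,
      (1 / 2) * ∑ t ∈ Icc 1 N, (y t ^ 2 - v t) ^ 2 + lam * ∑ t ∈ Icc 2 N, |v t - v (t - 1)|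
        ≤ (1 / 2) * ∑ t ∈ Icc 1 N, (y t ^ 2 - g t) ^ 2
          + lam * ∑ t ∈ Icc 2 N, |g t - g (t - 1)|) :
    (∀ t ∈ Icc 1 N, 0 < v t) ∧
    ∀ η' : ℕ → ℝ, (∀ t ∈ Icc 1 N, η' t < 0) →
      -(1 / 2) * ∑ t ∈ Icc 1 N, Real.log (-(-(1 / (2 * v t))))
          - ∑ t ∈ Icc 1 N, (-(1 / (2 * v t))) * y t ^ 2
          + lam * ∑ t ∈ Icc 2 N, |(-(1 / (2 * v t))) - (-(1 / (2 * v (t - 1))))|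
        ≤ -(1 / 2) * ∑ t ∈ Icc 1 N, Real.log (-η' t)
          - ∑ t ∈ Icc 1 N, η' t * y t ^ 2
          + lam * ∑ t ∈ Icc 2 N, |η' t - η' (t - 1)| := by
  have hmin' : ∀ g, fusedLassoObjective (Icc 1 N) (Icc 2 N) lam (fun t => y t ^ 2) v
      ≤ fusedLassoObjective (Icc 1 N) (Icc 2 N) lam (fun t => y t ^ 2) g := hmin
  have hJ : ∀ t ∈ Icc 2 N, t ∈ Icc 1 N ∧ t - 1 ∈ Icc 1 N := by
    intro t ht
    simp only [mem_Icc] at ht ⊢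
    omega
  have hv := pos_of_forall_fusedLassoObjective_le hlam.le
    (fun t ht => pow_two_pos_of_ne_zero (hy t ht)) hmin'
  exact ⟨hv, fun η hη => varianceNegLogLik_le_of_dirDeriv_nonneg hlam.le hJ hv hη
    (dirDeriv_nonneg_of_forall_fusedLassoObjective_le hmin')⟩

/-- positivity of the FLSA variance estimate: if `v = σ²` minimizes the
fused lasso objective on the squared data `y_t²` (with all `y_t ≠ 0`), then `v_t > 0` for
all `t`, and via `η_t = −1/(2 v_t)` it also minimizes the penalized Gaussian variance
negative log-likelihood over `η_t < 0` (1-indexed data). -/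
theorem stmt17 (N : ℕ) (hN : 1 ≤ N) (y : ℕ → ℝ) (hy : ∀ t ∈ Icc 1 N, y t ≠ 0)
    (lam : ℝ) (hlam : 0 < lam) (v : ℕ → ℝ)
    (hmin : ∀ g : ℕ → ℝ,
      (1 / 2) * ∑ t ∈ Icc 1 N, (y t ^ 2 - v t) ^ 2 + lam * ∑ t ∈ Icc 2 N, |v t - v (t - 1)|
        ≤ (1 / 2) * ∑ t ∈ Icc 1 N, (y t ^ 2 - g t) ^ 2
          + lam * ∑ t ∈ Icc 2 N, |g t - g (t - 1)|) :
    (∀ t ∈ Icc 1 N, 0 < v t) ∧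
    ∀ η' : ℕ → ℝ, (∀ t ∈ Icc 1 N, η' t < 0) →
      -(1 / 2) * ∑ t ∈ Icc 1 N, Real.log (-(-(1 / (2 * v t))))
          - ∑ t ∈ Icc 1 N, (-(1 / (2 * v t))) * y t ^ 2
          + lam * ∑ t ∈ Icc 2 N, |(-(1 / (2 * v t))) - (-(1 / (2 * v (t - 1))))|
        ≤ -(1 / 2) * ∑ t ∈ Icc 1 N, Real.log (-η' t)
          - ∑ t ∈ Icc 1 N, η' t * y t ^ 2
          + lam * ∑ t ∈ Icc 2 N, |η' t - η' (t - 1)| :=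
  stmt17_general N y hy lam hlam v hmin
end
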